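/- arXiv:1202.5349 — 9 statements merged into one kernel-verified Lean document; each statement's English description precedes it below -/
import Mathlib

section
/- Let N be a positive integer, let S_1,…,S_N and R_1,…,R_N be nonnegative real numbers, and let ρ > 0. Define the threshold link-selection sequence d*_1,…,d*_N ∈ {0,1} by d*_i = 1 if R_i ≥ ρ·S_i and d*_i = 0 otherwise, and assume it satisfies the flow-balance constraint Σ_{i=1}^N (1−d*_i)·S_i = Σ_{i=1}^N d*_i·R_i. Then for every sequence d_1,…,d_N with d_i ∈ [0,1] for all i that satisfies Σ_{i=1}^N (1−d_i)·S_i = Σ_{i=1}^N d_i·R_i, one has Σ_{i=1}^N d_i·R_i ≤ Σ_{i=1}^N d*_i·R_i. (Deterministic core of Theorem 3: the threshold policy maximizes the throughput among all link-selection policies satisfying the flow-balance constraint.) -/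
/-- **Deterministic core of Theorem 3** (Zlatanov–Schober–Popovski,
"Buffer-Aided Relaying with Adaptive Link Selection").
The threshold link-selection policy `d*_i = 1 ↔ R i ≥ ρ * S i`, provided it
satisfies the flow-balance constraint `∑ (1 - d*_i) S_i = ∑ d*_i R_i`,
maximizes the throughput `∑ d_i R_i` among all selection sequences
`d_i ∈ [0,1]` satisfying the flow-balance constraint. -/
theorem threshold_policy_maximizes_throughput
    (N : ℕ) (hN : 0 < N) (S R : Fin N → ℝ)
    (hS : ∀ i, 0 ≤ S i) (hR : ∀ i, 0 ≤ R i)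
    (ρ : ℝ) (hρ : 0 < ρ)
    (dstar : Fin N → ℝ)
    (hdstar : ∀ i, dstar i = if ρ * S i ≤ R i then 1 else 0)
    (hbalstar : ∑ i, (1 - dstar i) * S i = ∑ i, dstar i * R i)
    (d : Fin N → ℝ) (hd : ∀ i, d i ∈ Set.Icc (0 : ℝ) 1)
    (hbal : ∑ i, (1 - d i) * S i = ∑ i, d i * R i) :
    ∑ i, d i * R i ≤ ∑ i, dstar i * R i := by
  have key : ∀ i ∈ Finset.univ, d i * R i + ρ * ((1 - d i) * S i) ≤
      dstar i * R i + ρ * ((1 - dstar i) * S i) := by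
    intro i _
    obtain ⟨h0, h1⟩ := hd i
    rw [hdstar i]
    by_cases h : ρ * S i ≤ R i
    · simp only [if_pos h]
      nlinarith [hS i]
    · simp only [if_neg h]
      push_neg at h
      nlinarith [hR i]
  have hsum := Finset.sum_le_sum key
  rw [Finset.sum_add_distrib, Finset.sum_add_distrib, ← Finset.mul_sum, ← Finset.mul_sum,
    hbal, hbalstar] at hsum
  nlinarith
end

section
/- Let (Ω, 𝔽, P) be a probability space, let S, R : Ω → ℝ be nonnegative integrable random variables, and let ρ > 0. Define d* = 1 on the event {R ≥ ρ·S} and d* = 0 otherwise, and assume E[(1−d*)·S] = E[d*·R]. Then for every measurable function D : Ω → [0,1] satisfying E[(1−D)·S] = E[D·R], one has E[D·R] ≤ E[d*·R]. (Probabilistic form of Theorem 3: among all randomized link-selection rules satisfying the flow-balance constraint in expectation, the threshold rule d* maximizes the expected throughput E[D·R].) -/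
/-!
Lagrangian relaxation of the flow-balance constraint. Pointwise, `d* = 1{R - ρS ≥ 0}` maximizes
`d ↦ d (R - ρS)` over `d ∈ [0,1]`, so `E[D (R - ρS)] ≤ E[d* (R - ρS)]` for every rule `D`.
For a rule satisfying flow balance, `E[D S] = E[S] - E[D R]`, hence
`E[D (R - ρS)] = (1 + ρ) E[D R] - ρ E[S]`; since `1 + ρ > 0`, the inequality transfers to
the throughputs.
-/

open MeasureTheory Set

lemma mul_le_ite_nonneg_mul {d : ℝ} (hd : d ∈ Icc (0 : ℝ) 1) (x : ℝ) :
    d * x ≤ (if 0 ≤ x then 1 else 0) * x := by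
  split_ifs with hx
  · nlinarith [hd.2]
  · nlinarith [hd.1]

section FlowBalance

variable {Ω : Type*} [MeasurableSpace Ω] {μ : Measure Ω} {S R D : Ω → ℝ}

lemma MeasureTheory.Integrable.mul_of_mem_Icc {g : Ω → ℝ} (hg : Integrable g μ)
    (hD : AEStronglyMeasurable D μ) (hD01 : ∀ ω, D ω ∈ Icc (0 : ℝ) 1) :
    Integrable (fun ω => D ω * g ω) μ :=
  hg.bdd_mul (c := 1) hD <| .of_forall fun ω => by
    rw [Real.norm_eq_abs, abs_le]
    exact ⟨by linarith [(hD01 ω).1], (hD01 ω).2⟩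

lemma aestronglyMeasurable_threshold_rule (hS : AEStronglyMeasurable S μ)
    (hR : AEStronglyMeasurable R μ) (ρ : ℝ) :
    AEStronglyMeasurable (fun ω => if ρ * S ω ≤ R ω then (1 : ℝ) else 0) μ := by
  have hset : NullMeasurableSet {ω | ρ * S ω ≤ R ω} μ :=
    nullMeasurableSet_le (hS.const_mul ρ).aemeasurable hR.aemeasurable
  convert (aemeasurable_const.indicator₀ hset :
    AEMeasurable ({ω | ρ * S ω ≤ R ω}.indicator fun _ => (1 : ℝ)) μ).aestronglyMeasurable using 1
  ext ω
  simp [indicator_apply]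

lemma integral_mul_sub_eq_of_flow_balance (hS : Integrable S μ) (hR : Integrable R μ)
    (hD : AEStronglyMeasurable D μ) (hD01 : ∀ ω, D ω ∈ Icc (0 : ℝ) 1) (ρ : ℝ)
    (hbal : ∫ ω, (1 - D ω) * S ω ∂μ = ∫ ω, D ω * R ω ∂μ) :
    ∫ ω, D ω * (R ω - ρ * S ω) ∂μ = (1 + ρ) * ∫ ω, D ω * R ω ∂μ - ρ * ∫ ω, S ω ∂μ := by
  have hDR := hR.mul_of_mem_Icc hD hD01
  have hDS := hS.mul_of_mem_Icc hD hD01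
  have hDS_eq : ∫ ω, D ω * S ω ∂μ = ∫ ω, S ω ∂μ - ∫ ω, D ω * R ω ∂μ := by
    have h1D : ∫ ω, (1 - D ω) * S ω ∂μ = ∫ ω, S ω ∂μ - ∫ ω, D ω * S ω ∂μ := by
      rw [← integral_sub hS hDS]
      congr 1 with ω
      ring
    linarith
  calc ∫ ω, D ω * (R ω - ρ * S ω) ∂μ
      = ∫ ω, D ω * R ω ∂μ - ρ * ∫ ω, D ω * S ω ∂μ := by
        rw [← integral_const_mul, ← integral_sub hDR (hDS.const_mul ρ)]
        congr 1 with ω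
        ring
    _ = (1 + ρ) * ∫ ω, D ω * R ω ∂μ - ρ * ∫ ω, S ω ∂μ := by
        rw [hDS_eq]
        ring

end FlowBalance

theorem threshold_rule_maximizes_expected_throughput_general
    {Ω : Type*} [MeasurableSpace Ω] (P : Measure Ω)
    (S R : Ω → ℝ)
    (hSint : Integrable S P) (hRint : Integrable R P)
    (ρ : ℝ) (hρ : 0 < ρ)
    (dstar : Ω → ℝ)
    (hdstar : ∀ ω, dstar ω = if ρ * S ω ≤ R ω then 1 else 0)
    (hbalstar : ∫ ω, (1 - dstar ω) * S ω ∂P = ∫ ω, dstar ω * R ω ∂P)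
    (D : Ω → ℝ) (hDmeas : Measurable D)
    (hD01 : ∀ ω, D ω ∈ Set.Icc (0 : ℝ) 1)
    (hbalD : ∫ ω, (1 - D ω) * S ω ∂P = ∫ ω, D ω * R ω ∂P) :
    ∫ ω, D ω * R ω ∂P ≤ ∫ ω, dstar ω * R ω ∂P := by
  have hdstar_eq : dstar = fun ω => if ρ * S ω ≤ R ω then (1 : ℝ) else 0 := funext hdstar
  have hdstar_meas : AEStronglyMeasurable dstar P := hdstar_eq ▸
    aestronglyMeasurable_threshold_rule hSint.1 hRint.1 ρ
  have hdstar01 : ∀ ω, dstar ω ∈ Icc (0 : ℝ) 1 := fun ω => by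
    rw [hdstar ω]; split_ifs <;> simp
  have hRS : Integrable (fun ω => R ω - ρ * S ω) P := hRint.sub (hSint.const_mul ρ)
  have hlagrangian : ∫ ω, D ω * (R ω - ρ * S ω) ∂P ≤ ∫ ω, dstar ω * (R ω - ρ * S ω) ∂P :=
    integral_mono (hRS.mul_of_mem_Icc hDmeas.aestronglyMeasurable hD01)
      (hRS.mul_of_mem_Icc hdstar_meas hdstar01) fun ω => by
        simpa only [hdstar ω, sub_nonneg] using mul_le_ite_nonneg_mul (hD01 ω) (R ω - ρ * S ω)
  rw [integral_mul_sub_eq_of_flow_balance hSint hRint hDmeas.aestronglyMeasurable hD01 ρ hbalD,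
    integral_mul_sub_eq_of_flow_balance hSint hRint hdstar_meas hdstar01 ρ hbalstar] at hlagrangian
  exact le_of_mul_le_mul_left (by linarith) (by linarith : 0 < 1 + ρ)

/-- **Probabilistic form of Theorem 3.** On a probability space, with
nonnegative integrable random link capacities `S` and `R` and threshold rule
`d* = 1{R ≥ ρS}` satisfying the flow-balance constraint
`E[(1−d*)S] = E[d*R]`, the rule `d*` maximizes the expected throughput
`E[D·R]` among all measurable randomized selection rules `D : Ω → [0,1]`
satisfying the flow-balance constraint `E[(1−D)S] = E[D·R]`. -/
theorem threshold_rule_maximizes_expected_throughput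
    {Ω : Type*} [MeasurableSpace Ω] (P : Measure Ω) [IsProbabilityMeasure P]
    (S R : Ω → ℝ) (hS0 : ∀ ω, 0 ≤ S ω) (hR0 : ∀ ω, 0 ≤ R ω)
    (hSint : Integrable S P) (hRint : Integrable R P)
    (ρ : ℝ) (hρ : 0 < ρ)
    (dstar : Ω → ℝ)
    (hdstar : ∀ ω, dstar ω = if ρ * S ω ≤ R ω then 1 else 0)
    (hbalstar : ∫ ω, (1 - dstar ω) * S ω ∂P = ∫ ω, dstar ω * R ω ∂P)
    (D : Ω → ℝ) (hDmeas : Measurable D)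
    (hD01 : ∀ ω, D ω ∈ Set.Icc (0 : ℝ) 1)
    (hbalD : ∫ ω, (1 - D ω) * S ω ∂P = ∫ ω, D ω * R ω ∂P) :
    ∫ ω, D ω * R ω ∂P ≤ ∫ ω, dstar ω * R ω ∂P :=
  threshold_rule_maximizes_expected_throughput_general P S R hSint hRint ρ hρ dstar hdstar hbalstar
    D hDmeas hD01 hbalD
end

section
/- Let s and r be independent random variables, exponentially distributed with means Ω_S > 0 and Ω_R > 0, respectively. Then E[min(log₂(1+s), log₂(1+r))] = (1/ln 2)·exp((Ω_R+Ω_S)/(Ω_S·Ω_R))·E₁((Ω_R+Ω_S)/(Ω_S·Ω_R)). In particular, the throughput of conventional relaying without buffer over Rayleigh fading links equals τ_conv,1 = (1/2)·(1/ln 2)·exp((Ω_R+Ω_S)/(Ω_S·Ω_R))·E₁((Ω_R+Ω_S)/(Ω_S·Ω_R)). -/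
open MeasureTheory ProbabilityTheory

/-- The exponential integral function `E₁(x) = ∫_x^∞ e^{-t}/t dt`. -/
noncomputable def expIntE1 (x : ℝ) : ℝ := ∫ t in Set.Ioi x, Real.exp (-t) / t

/-- The law of an exponentially distributed random variable with mean `Ω`:
the measure on `ℝ` with density `(1/Ω) e^{-x/Ω}` on `[0,∞)` with respect to
Lebesgue measure. -/
noncomputable def expLaw (Ω : ℝ) : Measure ℝ :=
  (volume.restrict (Set.Ici (0 : ℝ))).withDensity
    (fun x => ENNReal.ofReal ((1 / Ω) * Real.exp (-x / Ω)))

/-!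
The survival function of the exponential law of rate `λ` is `t ↦ e^{-λ t}` on `[0, ∞)`.
Independence multiplies survival functions, so `min s r` is exponential of rate
`1/Ω_S + 1/Ω_R`, and `min` commutes with the increasing map `x ↦ log₂ (1 + x)`.
For `X` exponential of rate `λ`, the layer-cake formula with `(log (1 + t))' = 1/(1 + t)`
gives `E[log (1 + X)] = ∫_0^∞ e^{-λ t}/(1 + t) dt`, which the substitution `v = λ (1 + t)`
turns into `e^λ E₁(λ)`.
-/

open Set Real

lemma expLaw_eq_expMeasure (Ω : ℝ) : expLaw Ω = expMeasure Ω⁻¹ := by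
  rw [expLaw, ← withDensity_indicator measurableSet_Ici]
  change _ = volume.withDensity (exponentialPDF Ω⁻¹)
  congr 1
  ext x
  rw [exponentialPDF_eq]
  by_cases hx : 0 ≤ x
  · rw [indicator_of_mem (mem_Ici.2 hx), if_pos hx]
    ring_nf
  · rw [indicator_of_notMem (by simpa using hx), if_neg hx, ENNReal.ofReal_zero]

lemma ae_nonneg_expMeasure (r : ℝ) : ∀ᵐ x ∂expMeasure r, 0 ≤ x := by
  change ∀ᵐ x ∂volume.withDensity (exponentialPDF r), 0 ≤ x
  refine (ae_withDensity_iff (measurable_exponentialPDFReal r).ennreal_ofReal).2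
    (ae_of_all _ fun x hx => ?_)
  by_contra! h
  exact hx (exponentialPDF_of_neg h)

lemma expMeasure_Ioi {r : ℝ} (hr : 0 < r) (t : ℝ) :
    expMeasure r (Ioi t) = ENNReal.ofReal (exp (-(r * max t 0))) := by
  have := isProbabilityMeasure_expMeasure hr
  rw [← compl_Iic, prob_compl_eq_one_sub measurableSet_Iic, ← ofReal_cdf, cdf_expMeasure_eq hr]
  split_ifs with ht
  · rw [max_eq_left ht, ← ENNReal.ofReal_one,
      ← ENNReal.ofReal_sub _ (sub_nonneg.2 (exp_le_one_iff.2 (by nlinarith))), sub_sub_cancel]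
  · rw [max_eq_right (not_le.1 ht).le]
    simp

lemma MeasureTheory.Measure.ext_of_Ioi_of_isProbabilityMeasure {μ ν : Measure ℝ}
    [IsProbabilityMeasure μ] [IsProbabilityMeasure ν] (h : ∀ t, μ (Ioi t) = ν (Ioi t)) :
    μ = ν :=
  Measure.ext_of_Iic μ ν fun t => by
    rw [← compl_Ioi, prob_compl_eq_one_sub measurableSet_Ioi,
      prob_compl_eq_one_sub measurableSet_Ioi, h]

lemma map_min_eq_expMeasure_add {Ω : Type*} [MeasurableSpace Ω] {P : Measure Ω}
    [IsProbabilityMeasure P] {X Y : Ω → ℝ} (hX : Measurable X) (hY : Measurable Y)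
    {a b : ℝ} (ha : 0 < a) (hb : 0 < b) (hXa : P.map X = expMeasure a)
    (hYb : P.map Y = expMeasure b) (hXY : IndepFun X Y P) :
    P.map (fun ω => min (X ω) (Y ω)) = expMeasure (a + b) := by
  have hmin : Measurable fun ω => min (X ω) (Y ω) := hX.min hY
  have := isProbabilityMeasure_expMeasure (add_pos ha hb)
  have := Measure.isProbabilityMeasure_map (μ := P) hmin.aemeasurable
  refine Measure.ext_of_Ioi_of_isProbabilityMeasure fun t => ?_
  have hpre : (fun ω => min (X ω) (Y ω)) ⁻¹' Ioi t = X ⁻¹' Ioi t ∩ Y ⁻¹' Ioi t := by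
    ext ω; simp
  rw [Measure.map_apply hmin measurableSet_Ioi, hpre,
    hXY.measure_inter_preimage_eq_mul _ _ measurableSet_Ioi measurableSet_Ioi,
    ← Measure.map_apply hX measurableSet_Ioi, ← Measure.map_apply hY measurableSet_Ioi,
    hXa, hYb, expMeasure_Ioi ha, expMeasure_Ioi hb, expMeasure_Ioi (add_pos ha hb),
    ← ENNReal.ofReal_mul (exp_pos _).le, ← exp_add]
  ring_nf

lemma integral_inv_one_add_of_nonneg {x : ℝ} (hx : 0 ≤ x) :
    ∫ t in (0 : ℝ)..x, (1 + t)⁻¹ = log (1 + x) := by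
  rw [intervalIntegral.integral_comp_add_left (fun t => t⁻¹), add_zero,
    integral_inv (by rw [uIcc_of_le (by linarith)]; exact fun h => by linarith [h.1]), div_one]

lemma lintegral_log_one_add_eq_lintegral_meas_Ioi {μ : Measure ℝ}
    (hμ : ∀ᵐ x ∂μ, 0 ≤ x) :
    ∫⁻ x, ENNReal.ofReal (log (1 + x)) ∂μ
      = ∫⁻ t in Ioi 0, μ (Ioi t) * ENNReal.ofReal (1 + t)⁻¹ := by
  have hcont : ∀ t, 0 ≤ t → ContinuousOn (fun u : ℝ => (1 + u)⁻¹) (uIcc 0 t) := by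
    intro t ht
    rw [uIcc_of_le ht]
    exact (continuousOn_const.add continuousOn_id).inv₀ fun u hu =>
      (by linarith [hu.1] : (0 : ℝ) < 1 + u).ne'
  refine Eq.trans ?_ (lintegral_comp_eq_lintegral_meas_lt_mul μ hμ aemeasurable_id
    (fun t ht => (hcont t ht.le).intervalIntegrable)
    ((ae_restrict_mem measurableSet_Ioi).mono fun t ht =>
      inv_nonneg.2 (by linarith [mem_Ioi.1 ht])))
  exact lintegral_congr_ae (hμ.mono fun x hx =>
    congrArg ENNReal.ofReal (integral_inv_one_add_of_nonneg hx).symm)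

lemma integral_exp_neg_mul_div_one_add {r : ℝ} (hr : 0 < r) :
    ∫ t in Ioi 0, exp (-(r * t)) / (1 + t) = exp r * expIntE1 r := by
  have hshift : ∫ t in Ioi 0, exp (-(r * t)) / (1 + t)
      = ∫ u in Ioi 1, exp (-(r * (u - 1))) / u := by
    symm
    rw [← (measurePreserving_add_right volume (1 : ℝ)).setIntegral_preimage_emb
      (measurableEmbedding_addRight 1), preimage_add_const_Ioi, sub_self]
    simp_rw [add_sub_cancel_right, add_comm]
  have hscale : ∫ u in Ioi 1, exp (-(r * u)) / (r * u) = r⁻¹ * expIntE1 r := by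
    rw [integral_comp_mul_left_Ioi (fun v => exp (-v) / v) 1 hr, mul_one, smul_eq_mul,
      expIntE1]
  calc ∫ t in Ioi 0, exp (-(r * t)) / (1 + t)
      = ∫ u in Ioi 1, exp r * (r * (exp (-(r * u)) / (r * u))) := by
        rw [hshift]
        refine setIntegral_congr_fun measurableSet_Ioi fun u hu => ?_
        have hu : u ≠ 0 := by linarith [mem_Ioi.1 hu]
        rw [mul_sub, mul_one, neg_sub, sub_eq_add_neg, exp_add]
        field_simp
    _ = exp r * expIntE1 r := by
        rw [integral_const_mul, integral_const_mul, hscale, mul_inv_cancel_left₀ hr.ne']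

lemma integral_log_one_add_expMeasure {r : ℝ} (hr : 0 < r) :
    ∫ x, log (1 + x) ∂expMeasure r = exp r * expIntE1 r := by
  have hnn : 0 ≤ᵐ[expMeasure r] fun x => log (1 + x) :=
    (ae_nonneg_expMeasure r).mono fun x hx => log_nonneg (by linarith)
  have hint : IntegrableOn (fun t => exp (-(r * t)) / (1 + t)) (Ioi 0) := by
    refine (exp_neg_integrableOn_Ioi 0 hr).mono'
      (by fun_prop : Measurable fun t => exp (-(r * t)) / (1 + t)).aestronglyMeasurable
      ((ae_restrict_mem measurableSet_Ioi).mono fun t ht => ?_)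
    have ht : 1 ≤ 1 + t := by linarith [mem_Ioi.1 ht]
    rw [norm_div, norm_of_nonneg (exp_pos _).le, norm_of_nonneg (by linarith), neg_mul]
    exact div_le_self (exp_pos _).le ht
  have hpos : ∀ t ∈ Ioi (0 : ℝ), 0 < exp (-(r * t)) / (1 + t) := fun t ht =>
    div_pos (exp_pos _) (by linarith [mem_Ioi.1 ht])
  have hsurvival : ∀ t ∈ Ioi (0 : ℝ), expMeasure r (Ioi t) * ENNReal.ofReal (1 + t)⁻¹
      = ENNReal.ofReal (exp (-(r * t)) / (1 + t)) := fun t ht => by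
    rw [expMeasure_Ioi hr, max_eq_left (mem_Ioi.1 ht).le, ← ENNReal.ofReal_mul (exp_pos _).le,
      div_eq_mul_inv]
  rw [integral_eq_lintegral_of_nonneg_ae hnn
      (by fun_prop : Measurable fun x => log (1 + x)).aestronglyMeasurable,
    lintegral_log_one_add_eq_lintegral_meas_Ioi (ae_nonneg_expMeasure r),
    setLIntegral_congr_fun measurableSet_Ioi hsurvival,
    ← ofReal_integral_eq_lintegral_ofReal hint
      ((ae_restrict_mem measurableSet_Ioi).mono fun t ht => (hpos t ht).le),
    ENNReal.toReal_ofReal (setIntegral_nonneg measurableSet_Ioi fun t ht => (hpos t ht).le),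
    integral_exp_neg_mul_div_one_add hr]

lemma logb_one_add_min {b x y : ℝ} (hb : 1 < b) (hx : -1 < x) (hy : -1 < y) :
    logb b (1 + min x y) = min (logb b (1 + x)) (logb b (1 + y)) := by
  rcases le_total x y with h | h
  · rw [min_eq_left h, min_eq_left (logb_le_logb_of_le hb (by linarith) (by linarith))]
  · rw [min_eq_right h, min_eq_right (logb_le_logb_of_le hb (by linarith) (by linarith))]

/-- For independent exponential SNRs `s`, `r` with means `Ω_S`, `Ω_R`,
`E[min(log₂(1+s), log₂(1+r))] = (1/ln 2) e^{(Ω_R+Ω_S)/(Ω_SΩ_R)}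
E₁((Ω_R+Ω_S)/(Ω_SΩ_R))`; in particular, the throughput of conventional
relaying without buffer over Rayleigh fading links equals
`τ_conv,1 = (1/2)(1/ln 2) e^{(Ω_R+Ω_S)/(Ω_SΩ_R)} E₁((Ω_R+Ω_S)/(Ω_SΩ_R))`. -/
theorem conv_relaying_no_buffer_throughput_rayleigh
    {Ω : Type*} [MeasurableSpace Ω] (P : Measure Ω) [IsProbabilityMeasure P]
    (s r : Ω → ℝ) (hs : Measurable s) (hr : Measurable r)
    (ΩS ΩR : ℝ) (hΩS : 0 < ΩS) (hΩR : 0 < ΩR)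
    (hlaws : P.map s = expLaw ΩS) (hlawr : P.map r = expLaw ΩR)
    (hindep : IndepFun s r P) :
    (∫ ω, min (Real.logb 2 (1 + s ω)) (Real.logb 2 (1 + r ω)) ∂P
      = (1 / Real.log 2) * Real.exp ((ΩR + ΩS) / (ΩS * ΩR))
          * expIntE1 ((ΩR + ΩS) / (ΩS * ΩR))) ∧
    ((1 / 2) * ∫ ω, min (Real.logb 2 (1 + s ω)) (Real.logb 2 (1 + r ω)) ∂P
      = (1 / (2 * Real.log 2)) * Real.exp ((ΩR + ΩS) / (ΩS * ΩR))
          * expIntE1 ((ΩR + ΩS) / (ΩS * ΩR))) := by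
  rw [expLaw_eq_expMeasure] at hlaws hlawr
  have hrate : ΩS⁻¹ + ΩR⁻¹ = (ΩR + ΩS) / (ΩS * ΩR) := by field_simp
  have hmin := map_min_eq_expMeasure_add hs hr (inv_pos.2 hΩS) (inv_pos.2 hΩR) hlaws hlawr hindep
  have hs0 : ∀ᵐ ω ∂P, 0 ≤ s ω :=
    ae_of_ae_map hs.aemeasurable (hlaws ▸ ae_nonneg_expMeasure _)
  have hr0 : ∀ᵐ ω ∂P, 0 ≤ r ω :=
    ae_of_ae_map hr.aemeasurable (hlawr ▸ ae_nonneg_expMeasure _)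
  have hmean : ∫ ω, min (logb 2 (1 + s ω)) (logb 2 (1 + r ω)) ∂P
      = (1 / log 2) * exp ((ΩR + ΩS) / (ΩS * ΩR)) * expIntE1 ((ΩR + ΩS) / (ΩS * ΩR)) :=
    calc ∫ ω, min (logb 2 (1 + s ω)) (logb 2 (1 + r ω)) ∂P
        = ∫ ω, logb 2 (1 + min (s ω) (r ω)) ∂P := integral_congr_ae <| by
          filter_upwards [hs0, hr0] with ω hsω hrω
          exact (logb_one_add_min one_lt_two (by linarith) (by linarith)).symm
      _ = (∫ x, log (1 + x) ∂expMeasure (ΩS⁻¹ + ΩR⁻¹)) / log 2 := by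
          rw [← hmin, integral_map (hs.min hr).aemeasurable
            (by fun_prop : Measurable fun x => log (1 + x)).aestronglyMeasurable, ← integral_div]
          rfl
      _ = _ := by
          rw [integral_log_one_add_expMeasure (by positivity), hrate]
          ring
  exact ⟨hmean, by rw [hmean]; ring⟩
end

section
/- The function x ↦ e^x·E₁(x) is strictly decreasing on (0, ∞). In particular, for every Ω > 0, e^{2/Ω}·E₁(2/Ω) < e^{1/Ω}·E₁(1/Ω), and hence the throughput gain ratio τ_max/τ_conv,2 = 2 − e^{2/Ω}E₁(2/Ω)/(e^{1/Ω}E₁(1/Ω)) of buffer-aided relaying with adaptive link selection over conventional buffer-aided relaying satisfies τ_max/τ_conv,2 > 1 for symmetric Rayleigh links with mean SNR Ω. -/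
open Real MeasureTheory

lemma integrable_aux {x : ℝ} (hx : 0 < x) :
    IntegrableOn (fun u : ℝ => Real.exp (-u) / (u + x)) (Set.Ioi 0) := by
  have h1 : IntegrableOn (fun u : ℝ => Real.exp (-1 * u) * x⁻¹) (Set.Ioi 0) :=
    (exp_neg_integrableOn_Ioi 0 one_pos).mul_const _
  refine h1.integrable.mono ?_ ?_
  · apply Measurable.aestronglyMeasurable
    exact (Real.measurable_exp.comp measurable_neg).div (measurable_id.add_const x)
  · filter_upwards [ae_restrict_mem measurableSet_Ioi] with u hu
    simp only [Set.mem_Ioi] at hu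
    have hux : 0 < u + x := by linarith
    rw [Real.norm_eq_abs, Real.norm_eq_abs, abs_of_pos (by positivity),
      abs_of_pos (by positivity), neg_one_mul, div_eq_mul_inv]
    exact mul_le_mul_of_nonneg_left
      (inv_anti₀ hx (le_add_of_nonneg_left hu.le)) (Real.exp_pos _).le

lemma rep_aux {x : ℝ} (hx : 0 < x) :
    Real.exp x * expIntE1 x = ∫ u in Set.Ioi 0, Real.exp (-u) / (u + x) := by
  have hmp : MeasurePreserving (· + x) (volume : Measure ℝ) volume :=
    measurePreserving_add_right volume x
  have hemb : MeasurableEmbedding (· + x : ℝ → ℝ) :=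
    (MeasurableEquiv.addRight x).measurableEmbedding
  have h1 : expIntE1 x = ∫ u in Set.Ioi 0, Real.exp (-(u + x)) / (u + x) := by
    rw [expIntE1,
      ← hmp.setIntegral_preimage_emb hemb (fun t => Real.exp (-t) / t) (Set.Ioi x)]
    congr 1
    ext u
    simp [Set.mem_Ioi]
  rw [h1, ← integral_const_mul]
  refine setIntegral_congr_fun measurableSet_Ioi fun u hu => ?_
  rw [mul_div_assoc', ← Real.exp_add]
  ring_nf

lemma pos_aux {x : ℝ} (hx : 0 < x) :
    0 < ∫ u in Set.Ioi 0, Real.exp (-u) / (u + x) := by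
  rw [setIntegral_pos_iff_support_of_nonneg_ae ?nn (integrable_aux hx)]
  case nn =>
    filter_upwards [ae_restrict_mem measurableSet_Ioi] with u hu
    have : (0:ℝ) < u + x := by simp only [Set.mem_Ioi] at hu; linarith
    positivity
  have hsub : Set.Ioi (0:ℝ) ⊆ Function.support (fun u => Real.exp (-u) / (u + x)) := by
    intro u hu
    simp only [Set.mem_Ioi] at hu
    have : (0:ℝ) < u + x := by linarith
    simp only [Function.mem_support]
    positivity
  calc (0:ENNReal) < volume (Set.Ioi (0:ℝ)) := by simp
    _ ≤ _ := measure_mono (Set.subset_inter hsub subset_rfl)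

lemma strict_aux : StrictAntiOn (fun x : ℝ => Real.exp x * expIntE1 x) (Set.Ioi 0) := by
  intro x hx y hy hxy
  simp only [Set.mem_Ioi] at hx hy
  simp only [rep_aux hx, rep_aux hy]
  have hsub : (0:ℝ) < ∫ u in Set.Ioi 0,
      (Real.exp (-u) / (u + x) - Real.exp (-u) / (u + y)) := by
    have heq : (∫ u in Set.Ioi 0, (Real.exp (-u) / (u + x) - Real.exp (-u) / (u + y))) =
        ∫ u in Set.Ioi 0,
          ((fun u => Real.exp (-u) / (u + x)) - fun u => Real.exp (-u) / (u + y)) u := by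
      simp [Pi.sub_apply]
    rw [heq, setIntegral_pos_iff_support_of_nonneg_ae ?nn
      ((integrable_aux hx).sub (integrable_aux hy))]
    case nn =>
      filter_upwards [ae_restrict_mem measurableSet_Ioi] with u hu
      simp only [Set.mem_Ioi] at hu
      have h1 : (0:ℝ) < u + x := by linarith
      have h2 : u + x < u + y := by linarith
      have := div_lt_div_of_pos_left (Real.exp_pos (-u)) h1 h2
      simp only [Pi.zero_apply, Pi.sub_apply]
      linarith
    have hsupp : Set.Ioi (0:ℝ) ⊆ Function.support
        (fun u => Real.exp (-u) / (u + x) - Real.exp (-u) / (u + y)) := by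
      intro u hu
      simp only [Set.mem_Ioi] at hu
      have h1 : (0:ℝ) < u + x := by linarith
      have h2 : u + x < u + y := by linarith
      have := div_lt_div_of_pos_left (Real.exp_pos (-u)) h1 h2
      simp only [Function.mem_support, Pi.sub_apply]
      intro h; rw [sub_eq_zero] at h; linarith
    calc (0:ENNReal) < volume (Set.Ioi (0:ℝ)) := by simp
      _ ≤ _ := measure_mono (Set.subset_inter hsupp subset_rfl)
  rw [integral_sub (integrable_aux hx) (integrable_aux hy)] at hsub
  linarith

/-- The map `x ↦ eˣ E₁(x)` is strictly decreasing on `(0,∞)`; in particular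
`e^{2/Ω} E₁(2/Ω) < e^{1/Ω} E₁(1/Ω)` for every `Ω > 0`, and hence the throughput
gain ratio `τ_max/τ_conv,2 = 2 − e^{2/Ω}E₁(2/Ω)/(e^{1/Ω}E₁(1/Ω))` of
buffer-aided relaying with adaptive link selection over conventional
buffer-aided relaying exceeds `1` for symmetric Rayleigh links. -/
theorem expE1_strictAnti_and_gain_ratio_gt_one :
    StrictAntiOn (fun x : ℝ => Real.exp x * expIntE1 x) (Set.Ioi 0) ∧
    ∀ Ω : ℝ, 0 < Ω →
      Real.exp (2 / Ω) * expIntE1 (2 / Ω) < Real.exp (1 / Ω) * expIntE1 (1 / Ω) ∧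
      1 < 2 - Real.exp (2 / Ω) * expIntE1 (2 / Ω)
            / (Real.exp (1 / Ω) * expIntE1 (1 / Ω)) := by
  refine ⟨strict_aux, fun Ω hΩ => ?_⟩
  have h1 : (0:ℝ) < 1 / Ω := by positivity
  have h2 : (0:ℝ) < 2 / Ω := by positivity
  have hlt : 1 / Ω < 2 / Ω := by
    rw [div_lt_div_iff₀ hΩ hΩ]; nlinarith
  have hmain := strict_aux (Set.mem_Ioi.mpr h1) (Set.mem_Ioi.mpr h2) hlt
  simp only at hmain
  have hpos : 0 < Real.exp (1 / Ω) * expIntE1 (1 / Ω) := by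
    rw [rep_aux h1]; exact pos_aux h1
  refine ⟨hmain, ?_⟩
  have hdiv : Real.exp (2 / Ω) * expIntE1 (2 / Ω)
      / (Real.exp (1 / Ω) * expIntE1 (1 / Ω)) < 1 := (div_lt_one hpos).mpr hmain
  linarith
end

section
/- Define g(Ω) = 2 − e^{2/Ω}·E₁(2/Ω)/(e^{1/Ω}·E₁(1/Ω)) for Ω > 0. Then g(Ω) → 3/2 as Ω → 0⁺ and g(Ω) → 1 as Ω → ∞. (The throughput gain ratio τ_max/τ_conv,2 of buffer-aided relaying with adaptive link selection over conventional buffer-aided relaying for symmetric Rayleigh links ranges from 1 to 1.5.) -/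
/-! With `x = 1/Ω` the ratio is `e^{2x}E₁(2x)/(e^x E₁(x))`. For `x > 0`,
`e^{-x}/(x+1) ≤ E₁(x) ≤ e^{-x}/x`, so `x e^x E₁(x) → 1` as `x → ∞` and the ratio tends to `1/2`.
As `x → 0⁺`, `E₁(x) ≥ e^{-1} log(1/x) → ∞` while `E₁(x) - E₁(2x) = ∫_x^{2x} e^{-t}/t dt ≤ 1`,
so `E₁(2x)/E₁(x) → 1` and the ratio tends to `1`. -/

open Real MeasureTheory Filter

open Set Topology

lemma integrableOn_exp_neg_div_Ioi {x : ℝ} (hx : 0 < x) :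
    IntegrableOn (fun t => exp (-t) / t) (Ioi x) := by
  refine ((integrableOn_exp_neg_Ioi x).div_const x).mono' ?_ ?_
  · exact (continuousOn_id.neg.rexp.div continuousOn_id
      fun t ht => (hx.trans ht).ne').aestronglyMeasurable measurableSet_Ioi
  · filter_upwards [ae_restrict_mem measurableSet_Ioi] with t ht
    rw [norm_of_nonneg (div_nonneg (exp_pos _).le (hx.trans ht).le)]
    exact div_le_div_of_nonneg_left (exp_pos _).le hx ht.le

lemma expIntE1_le {x : ℝ} (hx : 0 < x) : expIntE1 x ≤ exp (-x) / x :=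
  calc expIntE1 x ≤ ∫ t in Ioi x, exp (-t) / x :=
        setIntegral_mono_on (integrableOn_exp_neg_div_Ioi hx)
          ((integrableOn_exp_neg_Ioi x).div_const x) measurableSet_Ioi
          fun t ht => div_le_div_of_nonneg_left (exp_pos _).le hx (le_of_lt ht)
    _ = exp (-x) / x := by rw [integral_div, integral_exp_neg_Ioi]

lemma hasDerivAt_neg_exp_neg_div_add_one {t : ℝ} (ht : t + 1 ≠ 0) :
    HasDerivAt (fun t => -exp (-t) / (t + 1)) (exp (-t) * (t + 2) / (t + 1) ^ 2) t := by
  have hnum : HasDerivAt (fun t => -exp (-t)) (exp (-t)) t := by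
    simpa using (hasDerivAt_neg t).exp.fun_neg
  exact (hnum.div ((hasDerivAt_id' t).add_const 1) ht).congr_deriv (by ring)

/-- `-e^{-t}/(t+1)` is an antiderivative of `e^{-t}(t+2)/(t+1)^2`, which is at most `e^{-t}/t`
because `t(t+2) ≤ (t+1)^2`. -/
lemma exp_neg_div_add_one_le_expIntE1 {x : ℝ} (hx : 0 < x) :
    exp (-x) / (x + 1) ≤ expIntE1 x := by
  have hle : ∀ t ∈ Ioi x, exp (-t) * (t + 2) / (t + 1) ^ 2 ≤ exp (-t) / t := by
    intro t ht
    have ht0 : 0 < t := hx.trans ht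
    rw [div_le_div_iff₀ (by positivity) ht0]
    nlinarith [(exp_pos (-t)).le]
  have hint : IntegrableOn (fun t => exp (-t) * (t + 2) / (t + 1) ^ 2) (Ioi x) := by
    refine (integrableOn_exp_neg_div_Ioi hx).mono' ?_ ?_
    · exact (ContinuousOn.div (by fun_prop) (by fun_prop) fun t ht =>
        by have := hx.trans ht; positivity).aestronglyMeasurable measurableSet_Ioi
    · filter_upwards [ae_restrict_mem measurableSet_Ioi] with t ht
      have := hx.trans ht
      rw [norm_of_nonneg (by positivity)]
      exact hle t ht
  have hlim : Tendsto (fun t => -exp (-t) / (t + 1)) atTop (𝓝 0) := by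
    simpa using tendsto_exp_neg_atTop_nhds_zero.neg.div_atTop
      (tendsto_atTop_add_const_right _ 1 tendsto_id)
  calc exp (-x) / (x + 1) = ∫ t in Ioi x, exp (-t) * (t + 2) / (t + 1) ^ 2 := by
        rw [integral_Ioi_of_hasDerivAt_of_tendsto' (fun t ht =>
          hasDerivAt_neg_exp_neg_div_add_one (by linarith [mem_Ici.1 ht])) hint hlim]
        ring
    _ ≤ expIntE1 x := setIntegral_mono_on hint (integrableOn_exp_neg_div_Ioi hx)
        measurableSet_Ioi hle

lemma expIntE1_pos {x : ℝ} (hx : 0 < x) : 0 < expIntE1 x :=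
  (by positivity : 0 < exp (-x) / (x + 1)).trans_le (exp_neg_div_add_one_le_expIntE1 hx)

lemma expIntE1_sub_expIntE1 {x y : ℝ} (hx : 0 < x) (hxy : x ≤ y) :
    expIntE1 x - expIntE1 y = ∫ t in x..y, exp (-t) / t :=
  intervalIntegral.integral_Ioi_sub_Ioi (integrableOn_exp_neg_div_Ioi hx) hxy

lemma intervalIntegrable_exp_neg_div {x y : ℝ} (hx : 0 < x) (hxy : x ≤ y) :
    IntervalIntegrable (fun t => exp (-t) / t) volume x y :=
  (intervalIntegrable_iff_integrableOn_Ioc_of_le hxy).2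
    ((integrableOn_exp_neg_div_Ioi hx).mono_set Ioc_subset_Ioi_self)

lemma expIntE1_le_expIntE1 {x y : ℝ} (hx : 0 < x) (hxy : x ≤ y) :
    expIntE1 y ≤ expIntE1 x := by
  have := intervalIntegral.integral_nonneg (μ := volume) hxy fun t ht =>
    div_nonneg (exp_pos (-t)).le (hx.trans_le ht.1).le
  linarith [expIntE1_sub_expIntE1 hx hxy]

lemma expIntE1_sub_expIntE1_two_mul_le_one {x : ℝ} (hx : 0 < x) :
    expIntE1 x - expIntE1 (2 * x) ≤ 1 := by
  have hxy : x ≤ 2 * x := by linarith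
  rw [expIntE1_sub_expIntE1 hx hxy]
  calc ∫ t in x..2 * x, exp (-t) / t ≤ ∫ _ in x..2 * x, 1 / x :=
        intervalIntegral.integral_mono_on hxy (intervalIntegrable_exp_neg_div hx hxy)
          intervalIntegrable_const fun t ht =>
            div_le_div₀ zero_le_one (exp_le_one_iff.2 (by linarith [ht.1])) hx ht.1
    _ = 1 := by rw [intervalIntegral.integral_const, smul_eq_mul]; field_simp; ring

lemma tendsto_expIntE1_nhdsGT_zero : Tendsto expIntE1 (𝓝[>] 0) atTop := by
  have hlog : Tendsto (fun x => exp (-1) * -log x) (𝓝[>] 0) atTop :=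
    (tendsto_neg_atBot_atTop.comp tendsto_log_nhdsGT_zero).const_mul_atTop (exp_pos _)
  refine tendsto_atTop_mono' _ ?_ hlog
  filter_upwards [Ioo_mem_nhdsGT (zero_lt_one' ℝ)] with x ⟨hx0, hx1⟩
  calc exp (-1) * -log x = ∫ t in x..1, exp (-1) * t⁻¹ := by
        rw [intervalIntegral.integral_const_mul, integral_inv_of_pos hx0 one_pos, one_div,
          log_inv]
    _ ≤ ∫ t in x..1, exp (-t) / t :=
        intervalIntegral.integral_mono_on hx1.le
          ((intervalIntegral.intervalIntegrable_inv (fun t ht => ?_) continuousOn_id).const_mul _)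
          (intervalIntegrable_exp_neg_div hx0 hx1.le) fun t ht => ?_
    _ ≤ expIntE1 x := by
        linarith [expIntE1_sub_expIntE1 hx0 hx1.le, expIntE1_pos one_pos]
  · exact (hx0.trans_le (uIcc_of_le hx1.le ▸ ht).1).ne'
  · rw [div_eq_mul_inv]
    gcongr
    · have := hx0.trans_le ht.1
      positivity
    · linarith [ht.2]

lemma tendsto_mul_exp_mul_expIntE1_atTop :
    Tendsto (fun x => x * (exp x * expIntE1 x)) atTop (𝓝 1) := by
  have hlo : Tendsto (fun x : ℝ => 1 - (x + 1)⁻¹) atTop (𝓝 1) := by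
    simpa using tendsto_const_nhds.sub
      (tendsto_inv_atTop_zero.comp (tendsto_atTop_add_const_right _ 1 (tendsto_id (α := ℝ))))
  refine tendsto_of_tendsto_of_tendsto_of_le_of_le' hlo tendsto_const_nhds ?_ ?_ <;>
    filter_upwards [eventually_gt_atTop 0] with x hx <;>
    have hxexp : 0 ≤ x * exp x := by positivity
  · calc 1 - (x + 1)⁻¹ = x * exp x * (exp (-x) / (x + 1)) := by
          rw [exp_neg]; field_simp; ring
      _ ≤ x * exp x * expIntE1 x := by gcongr; exact exp_neg_div_add_one_le_expIntE1 hx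
      _ = x * (exp x * expIntE1 x) := mul_assoc ..
  · calc x * (exp x * expIntE1 x) = x * exp x * expIntE1 x := (mul_assoc ..).symm
      _ ≤ x * exp x * (exp (-x) / x) := by gcongr; exact expIntE1_le hx
      _ = 1 := by rw [exp_neg]; field_simp

lemma tendsto_exp_mul_expIntE1_two_mul_div_atTop :
    Tendsto (fun x => exp (2 * x) * expIntE1 (2 * x) / (exp x * expIntE1 x)) atTop (𝓝 (1 / 2)) := by
  have h := tendsto_mul_exp_mul_expIntE1_atTop
  have h2 : Tendsto (fun x => 2 * x * (exp (2 * x) * expIntE1 (2 * x))) atTop (𝓝 1) :=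
    h.comp (tendsto_id.const_mul_atTop two_pos)
  have := (h2.div h one_ne_zero).div_const 2
  rw [div_one] at this
  refine this.congr' ?_
  filter_upwards [eventually_gt_atTop 0] with x hx
  have := expIntE1_pos hx
  simp only [Pi.div_apply]
  field_simp

lemma tendsto_expIntE1_two_mul_div_nhdsGT_zero :
    Tendsto (fun x => expIntE1 (2 * x) / expIntE1 x) (𝓝[>] 0) (𝓝 1) := by
  have hlo : Tendsto (fun x => 1 - (expIntE1 x)⁻¹) (𝓝[>] 0) (𝓝 1) := by
    simpa using tendsto_const_nhds.sub tendsto_expIntE1_nhdsGT_zero.inv_tendsto_atTop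
  refine tendsto_of_tendsto_of_tendsto_of_le_of_le' hlo tendsto_const_nhds ?_ ?_ <;>
    filter_upwards [self_mem_nhdsWithin] with x (hx : 0 < x) <;>
    have hE := expIntE1_pos hx
  · rw [le_div_iff₀ hE, sub_mul, inv_mul_cancel₀ hE.ne']
    linarith [expIntE1_sub_expIntE1_two_mul_le_one hx]
  · exact (div_le_one hE).2 (expIntE1_le_expIntE1 hx (by linarith))

lemma tendsto_exp_mul_expIntE1_two_mul_div_nhdsGT_zero :
    Tendsto (fun x => exp (2 * x) * expIntE1 (2 * x) / (exp x * expIntE1 x)) (𝓝[>] 0) (𝓝 1) := by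
  have hexp : Tendsto exp (𝓝[>] 0) (𝓝 1) := by
    simpa using continuous_exp.continuousWithinAt.tendsto (x := 0) (s := Ioi 0)
  have := hexp.mul tendsto_expIntE1_two_mul_div_nhdsGT_zero
  rw [mul_one] at this
  refine this.congr fun x => ?_
  rw [two_mul, exp_add]
  field_simp

/-- The throughput gain ratio
`g(Ω) = 2 − e^{2/Ω}E₁(2/Ω)/(e^{1/Ω}E₁(1/Ω))` of buffer-aided relaying with
adaptive link selection over conventional buffer-aided relaying for symmetric
Rayleigh links satisfies `g(Ω) → 3/2` as `Ω → 0⁺` and `g(Ω) → 1` as `Ω → ∞`. -/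
theorem gain_ratio_limits :
    Tendsto
      (fun Ω : ℝ => 2 - Real.exp (2 / Ω) * expIntE1 (2 / Ω)
          / (Real.exp (1 / Ω) * expIntE1 (1 / Ω)))
      (nhdsWithin 0 (Set.Ioi 0)) (nhds (3 / 2)) ∧
    Tendsto
      (fun Ω : ℝ => 2 - Real.exp (2 / Ω) * expIntE1 (2 / Ω)
          / (Real.exp (1 / Ω) * expIntE1 (1 / Ω)))
      atTop (nhds 1) := by
  set F := fun x : ℝ => 2 - exp (2 * x) * expIntE1 (2 * x) / (exp x * expIntE1 x)
  have hF_comp_inv : (fun Ω : ℝ => 2 - exp (2 / Ω) * expIntE1 (2 / Ω) / (exp (1 / Ω) * expIntE1 (1 / Ω)))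
      = F ∘ (·⁻¹) := by
    funext Ω
    simp only [F, Function.comp_apply, div_eq_mul_inv, one_mul]
  rw [hF_comp_inv]
  constructor
  · have hF_lim : Tendsto F atTop (𝓝 (3 / 2)) := by
      convert tendsto_const_nhds.sub tendsto_exp_mul_expIntE1_two_mul_div_atTop using 2
      norm_num
    exact hF_lim.comp tendsto_inv_nhdsGT_zero
  · have hF_lim : Tendsto F (𝓝[>] 0) (𝓝 1) := by
      convert tendsto_const_nhds.sub tendsto_exp_mul_expIntE1_two_mul_div_nhdsGT_zero using 2
      norm_num
    exact hF_lim.comp tendsto_inv_atTop_nhdsGT_zero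
end

section
/- Let λ > 0, ρ > 0, h_S > 0, h_R > 0. Define γ*_S = max(0, ρ/λ − 1/h_S), γ*_R = max(0, 1/λ − 1/h_R), and d* ∈ {0,1} by: d* = 1 if either [ ln(h_R/λ) + λ/h_R − 1 > ρ·ln(ρ·h_S/λ) + λ/h_S − ρ and h_R > λ and h_S > λ/ρ ] or [ h_R > λ and h_S ≤ λ/ρ ], and d* = 0 otherwise. Then (d*, γ*_S, γ*_R) maximizes φ(d, γ_S, γ_R) = d·(ln(1+γ_R·h_R) − λ·γ_R) + (1−d)·(ρ·ln(1+γ_S·h_S) − λ·γ_S) over all d ∈ {0,1}, γ_S ≥ 0, γ_R ≥ 0, and the maximal value equals max( W_R, W_S ), where W_R = ln(h_R/λ) + λ/h_R − 1 if h_R > λ and W_R = 0 otherwise, and W_S = ρ·ln(ρ·h_S/λ) + λ/h_S − ρ if h_S > λ/ρ and W_S = 0 otherwise. (Pointwise optimality of the power allocation and link-selection rule (39)–(41) of Theorem 4.) -/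
open Real

lemma opt_aux (lam h c : ℝ) (hlam : 0 < lam) (hh : 0 < h) (hc : 0 < c) :
    (∀ γ, 0 ≤ γ → c * Real.log (1 + γ * h) - lam * γ ≤
      c * Real.log (1 + (max 0 (c/lam - 1/h)) * h) - lam * (max 0 (c/lam - 1/h))) ∧
    c * Real.log (1 + (max 0 (c/lam - 1/h)) * h) - lam * (max 0 (c/lam - 1/h)) =
      (if lam / c < h then c * Real.log (c * h / lam) + lam / h - c else 0) := by
  set g := max 0 (c/lam - 1/h) with hg
  have hg0 : 0 ≤ g := le_max_left _ _
  have hA : 0 < 1 + g * h := by positivity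
  constructor
  · intro γ hγ
    have hB : 0 < 1 + γ * h := by positivity
    have hlog : Real.log (1 + γ * h) - Real.log (1 + g * h) ≤ (γ - g) * h / (1 + g * h) := by
      rw [← Real.log_div (ne_of_gt hB) (ne_of_gt hA)]
      have := Real.log_le_sub_one_of_pos (div_pos hB hA)
      calc Real.log ((1 + γ * h) / (1 + g * h)) ≤ (1 + γ * h) / (1 + g * h) - 1 := this
        _ = (γ - g) * h / (1 + g * h) := by field_simp; ring
    have key : c * ((γ - g) * h / (1 + g * h)) - lam * (γ - g) ≤ 0 := by
      rcases le_or_gt (c / lam - 1 / h) 0 with hle | hpos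
      · have hgz : g = 0 := max_eq_left hle
        have hch : c * h ≤ lam := by
          rw [sub_nonpos, div_le_div_iff₀ hlam hh] at hle
          linarith
        rw [hgz]
        simp only [zero_mul, add_zero, sub_zero, div_one]
        nlinarith
      · have hgz : g = c / lam - 1 / h := max_eq_right hpos.le
        have hAeq : 1 + g * h = c * h / lam := by
          rw [hgz]; field_simp; ring
        rw [hAeq]
        have : c * ((γ - g) * h / (c * h / lam)) = lam * (γ - g) := by
          field_simp
        rw [this]; simp
    nlinarith [key]
  · rcases le_or_gt (c / lam - 1 / h) 0 with hle | hpos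
    · have hgz : g = 0 := max_eq_left hle
      have hcond : ¬ (lam / c < h) := by
        rw [sub_nonpos, div_le_div_iff₀ hlam hh] at hle
        rw [not_lt, le_div_iff₀ hc]
        nlinarith
      rw [hgz, if_neg hcond]; simp
    · have hgz : g = c / lam - 1 / h := max_eq_right hpos.le
      have hcond : lam / c < h := by
        rw [sub_pos, div_lt_div_iff₀ hh hlam] at hpos
        rw [div_lt_iff₀ hc]; nlinarith
      have hAeq : 1 + g * h = c * h / lam := by rw [hgz]; field_simp; ring
      rw [if_pos hcond, hAeq, hgz]
      field_simp
      ring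

/-- **Pointwise optimality of the power allocation and link-selection rule
(39)–(41) of Theorem 4.** With `γ*_S = max(0, ρ/λ − 1/h_S)`,
`γ*_R = max(0, 1/λ − 1/h_R)` and `d*` the link-selection rule (41), the triple
`(d*, γ*_S, γ*_R)` maximizes the per-slot Lagrangian
`φ(d, γ_S, γ_R) = d (ln(1+γ_R h_R) − λγ_R) + (1−d)(ρ ln(1+γ_S h_S) − λγ_S)`
over `d ∈ {0,1}`, `γ_S ≥ 0`, `γ_R ≥ 0`, and the maximal value is
`max(W_R, W_S)`. -/
theorem pointwise_optimal_power_and_link_selection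
    (lam ρ hS hR : ℝ) (hlam : 0 < lam) (hρ : 0 < ρ) (hhS : 0 < hS) (hhR : 0 < hR)
    (φ : ℝ → ℝ → ℝ → ℝ)
    (hφ : ∀ d γS γR, φ d γS γR =
      d * (Real.log (1 + γR * hR) - lam * γR)
        + (1 - d) * (ρ * Real.log (1 + γS * hS) - lam * γS))
    (γSstar γRstar dstar WR WS : ℝ)
    (hγS : γSstar = max 0 (ρ / lam - 1 / hS))
    (hγR : γRstar = max 0 (1 / lam - 1 / hR))
    (hdstar : dstar =
      if (Real.log (hR / lam) + lam / hR - 1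
            > ρ * Real.log (ρ * hS / lam) + lam / hS - ρ
          ∧ lam < hR ∧ lam / ρ < hS)
        ∨ (lam < hR ∧ hS ≤ lam / ρ) then 1 else 0)
    (hWR : WR = if lam < hR then Real.log (hR / lam) + lam / hR - 1 else 0)
    (hWS : WS = if lam / ρ < hS then ρ * Real.log (ρ * hS / lam) + lam / hS - ρ
                else 0) :
    (∀ d γS γR, (d = 0 ∨ d = 1) → 0 ≤ γS → 0 ≤ γR →
        φ d γS γR ≤ φ dstar γSstar γRstar) ∧
    φ dstar γSstar γRstar = max WR WS := by
  obtain ⟨optS, valS⟩ := opt_aux lam hS ρ hlam hhS hρ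
  obtain ⟨optR, valR⟩ := opt_aux lam hR 1 hlam hhR one_pos
  have hVS : ρ * Real.log (1 + γSstar * hS) - lam * γSstar = WS := by
    rw [hγS, hWS]; exact valS
  have hVR : Real.log (1 + γRstar * hR) - lam * γRstar = WR := by
    rw [hγR, hWR]
    have := valR
    simpa using this
  -- nonnegativity of WR, WS
  have hWR0 : 0 ≤ WR := by
    rw [hWR]
    split_ifs with h
    · have h1 : Real.log (lam / hR) ≤ lam / hR - 1 :=
        Real.log_le_sub_one_of_pos (by positivity)
      have h2 : Real.log (hR / lam) = - Real.log (lam / hR) := by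
        rw [← Real.log_inv]; congr 1; field_simp
      rw [h2]; linarith
    · exact le_refl 0
  have hWS0 : 0 ≤ WS := by
    rw [hWS]
    split_ifs with h
    · have h1 : Real.log (lam / (ρ * hS)) ≤ lam / (ρ * hS) - 1 :=
        Real.log_le_sub_one_of_pos (by positivity)
      have h2 : Real.log (ρ * hS / lam) = - Real.log (lam / (ρ * hS)) := by
        rw [← Real.log_inv]; congr 1; field_simp
      have h4 : ρ * (lam / (ρ * hS)) = lam / hS := by field_simp
      have h5 : ρ * Real.log (lam / (ρ * hS)) ≤ lam / hS - ρ := by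
        calc ρ * Real.log (lam / (ρ * hS)) ≤ ρ * (lam / (ρ * hS) - 1) :=
              mul_le_mul_of_nonneg_left h1 hρ.le
          _ = lam / hS - ρ := by rw [mul_sub, h4, mul_one]
      rw [h2, mul_neg]; linarith
    · exact le_refl 0
  have hval : φ dstar γSstar γRstar = max WR WS := by
    rw [hφ, hdstar]
    split_ifs with hc
    · have hRmax : max WR WS = WR := by
        rcases hc with ⟨hgt, hR1, hS1⟩ | ⟨hR1, hS1⟩
        · rw [max_eq_left]
          rw [hWR, if_pos hR1, hWS, if_pos hS1]
          exact le_of_lt hgt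
        · rw [max_eq_left]
          rw [hWS, if_neg (not_lt.mpr hS1)]
          exact hWR0
      rw [hRmax]
      simpa using hVR
    · push_neg at hc
      obtain ⟨hc1, hc2⟩ := hc
      have hSmax : max WR WS = WS := by
        by_cases hR1 : lam < hR
        · have hS1 : lam / ρ < hS := hc2 hR1
          have hle : Real.log (hR / lam) + lam / hR - 1 ≤
              ρ * Real.log (ρ * hS / lam) + lam / hS - ρ := by
            by_contra hgt
            exact absurd (hc1 (lt_of_not_ge hgt) hR1) (not_le.mpr hS1)
          rw [max_eq_right]
          rw [hWR, if_pos hR1, hWS, if_pos hS1]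
          exact hle
        · rw [max_eq_right]
          rw [hWR, if_neg hR1]
          exact hWS0
      rw [hSmax]
      simpa using hVS
  refine ⟨?_, hval⟩
  intro d γS γR hd hγSnn hγRnn
  rw [hval, hφ]
  rcases hd with rfl | rfl
  · simp only [zero_mul, zero_add, sub_zero, one_mul]
    calc ρ * Real.log (1 + γS * hS) - lam * γS
        ≤ ρ * Real.log (1 + γSstar * hS) - lam * γSstar := by
          rw [hγS]; exact optS γS hγSnn
      _ = WS := hVS
      _ ≤ max WR WS := le_max_right _ _
  · simp only [sub_self, zero_mul, add_zero, one_mul]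
    calc Real.log (1 + γR * hR) - lam * γR
        ≤ Real.log (1 + γRstar * hR) - lam * γRstar := by
          rw [hγR]
          have := optR γR hγRnn
          simpa using this
      _ = WR := hVR
      _ ≤ max WR WS := le_max_left _ _
end

section
/- Let N be a positive integer, let h_{S,i} > 0 and h_{R,i} > 0 for i = 1,…,N, and let λ > 0, ρ > 0, Γ > 0. For each i define γ*_{S,i} = max(0, ρ/λ − 1/h_{S,i}), γ*_{R,i} = max(0, 1/λ − 1/h_{R,i}), and d*_i ∈ {0,1} by: d*_i = 1 if either [ ln(h_{R,i}/λ) + λ/h_{R,i} − 1 > ρ·ln(ρ·h_{S,i}/λ) + λ/h_{S,i} − ρ and h_{R,i} > λ and h_{S,i} > λ/ρ ] or [ h_{R,i} > λ and h_{S,i} ≤ λ/ρ ], and d*_i = 0 otherwise. Assume the flow-balance constraint Σ_i (1−d*_i)·log₂(1+γ*_{S,i}·h_{S,i}) = Σ_i d*_i·log₂(1+γ*_{R,i}·h_{R,i}) holds and the power constraint is met with equality: Σ_i [(1−d*_i)·γ*_{S,i} + d*_i·γ*_{R,i}] = N·Γ. Then for all d_i ∈ [0,1], γ_{S,i} ≥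 0, γ_{R,i} ≥ 0 (i = 1,…,N) satisfying Σ_i (1−d_i)·log₂(1+γ_{S,i}·h_{S,i}) = Σ_i d_i·log₂(1+γ_{R,i}·h_{R,i}) and Σ_i [(1−d_i)·γ_{S,i} + d_i·γ_{R,i}] ≤ N·Γ, one has Σ_i d_i·log₂(1+γ_{R,i}·h_{R,i}) ≤ Σ_i d*_i·log₂(1+γ*_{R,i}·h_{R,i}). (Deterministic core of Theorem 4: the water-filling powers together with the link-selection rule (41) maximize the throughput subject to the flow-balance and average power constraints.) -/
open Real

/-- Water-filling pointwise bound. -/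
lemma wf_bound {a h lam : ℝ} (ha : 0 < a) (hh : 0 < h) (hlam : 0 < lam)
    {γ : ℝ} (hγ : 0 ≤ γ) :
    a * Real.log (1 + γ * h) - lam * γ ≤
      a * Real.log (1 + max 0 (a / lam - 1 / h) * h) - lam * max 0 (a / lam - 1 / h) := by
  set g := max 0 (a / lam - 1 / h) with hgdef
  have hg0 : 0 ≤ g := le_max_left _ _
  have hu : (0:ℝ) < 1 + γ * h := by nlinarith [mul_nonneg hγ hh.le]
  have hu' : (0:ℝ) < 1 + g * h := by nlinarith [mul_nonneg hg0 hh.le]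
  have hlog : Real.log (1 + γ * h) - Real.log (1 + g * h) ≤ (1 + γ * h) / (1 + g * h) - 1 := by
    rw [← Real.log_div hu.ne' hu'.ne']
    exact Real.log_le_sub_one_of_pos (div_pos hu hu')
  have key : a * ((1 + γ * h) / (1 + g * h) - 1) ≤ lam * (γ - g) := by
    rcases le_or_gt (a / lam - 1 / h) 0 with hc | hc
    · have hg : g = 0 := max_eq_left hc
      have hah : a * h ≤ lam := by
        have h1 : a / lam ≤ 1 / h := by linarith
        rw [div_le_div_iff₀ hlam hh] at h1; linarith
      rw [hg]
      have : (1 + γ * h) / (1 + (0:ℝ) * h) - 1 = γ * h := by norm_num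
      rw [this]
      nlinarith
    · have hg : g = a / lam - 1 / h := max_eq_right hc.le
      have heq : a * ((1 + γ * h) / (1 + g * h) - 1) = lam * (γ - g) := by
        rw [hg]
        have hhne := hh.ne'
        have hlne := hlam.ne'
        have h1 : 1 + (a / lam - 1 / h) * h = a * h / lam := by field_simp; ring
        rw [h1]
        field_simp
        ring
      linarith
  nlinarith [mul_le_mul_of_nonneg_left hlog ha.le]

/-- Closed form of the water-filled value when the channel is good. -/
lemma wf_closed {a h lam : ℝ} (ha : 0 < a) (hh : 0 < h) (hlam : 0 < lam)
    (hcond : lam / a < h) :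
    a * Real.log (1 + max 0 (a / lam - 1 / h) * h) - lam * max 0 (a / lam - 1 / h)
      = a * Real.log (a * h / lam) - a + lam / h := by
  have hpos : 0 < a / lam - 1 / h := by
    rw [sub_pos, div_lt_div_iff₀ hh hlam]
    rw [div_lt_iff₀ ha] at hcond
    nlinarith
  rw [max_eq_right hpos.le]
  have h1 : 1 + (a / lam - 1 / h) * h = a * h / lam := by
    field_simp
    ring
  rw [h1]
  field_simp
  ring

/-- Zero water level when the channel is bad. -/
lemma wf_zero {a h lam : ℝ} (hcond : h ≤ lam / a) (ha : 0 < a) (hh : 0 < h) (hlam : 0 < lam) :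
    max 0 (a / lam - 1 / h) = 0 := by
  apply max_eq_left
  rw [sub_nonpos, div_le_div_iff₀ hlam hh]
  rw [le_div_iff₀ ha] at hcond
  nlinarith

/-- **Deterministic core of Theorem 4.** The water-filling powers
`γ*_{S,i} = max(0, ρ/λ − 1/h_{S,i})`, `γ*_{R,i} = max(0, 1/λ − 1/h_{R,i})`
together with the link-selection rule (41), provided they meet the
flow-balance constraint and the power constraint with equality, maximize the
throughput `∑ d_i log₂(1+γ_{R,i} h_{R,i})` among all selection variables
`d_i ∈ [0,1]` and powers `γ_{S,i}, γ_{R,i} ≥ 0` satisfying the flow-balance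
constraint and the average power constraint. -/
theorem waterfilling_link_selection_maximizes_throughput
    (N : ℕ) (hN : 0 < N) (hSc hRc : Fin N → ℝ)
    (hhS : ∀ i, 0 < hSc i) (hhR : ∀ i, 0 < hRc i)
    (lam ρ Γ : ℝ) (hlam : 0 < lam) (hρ : 0 < ρ) (hΓ : 0 < Γ)
    (γSstar γRstar dstar : Fin N → ℝ)
    (hγS : ∀ i, γSstar i = max 0 (ρ / lam - 1 / hSc i))
    (hγR : ∀ i, γRstar i = max 0 (1 / lam - 1 / hRc i))
    (hdstar : ∀ i, dstar i =
      if (Real.log (hRc i / lam) + lam / hRc i - 1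
            > ρ * Real.log (ρ * hSc i / lam) + lam / hSc i - ρ
          ∧ lam < hRc i ∧ lam / ρ < hSc i)
        ∨ (lam < hRc i ∧ hSc i ≤ lam / ρ) then 1 else 0)
    (hbalstar : ∑ i, (1 - dstar i) * Real.logb 2 (1 + γSstar i * hSc i)
      = ∑ i, dstar i * Real.logb 2 (1 + γRstar i * hRc i))
    (hpowstar : ∑ i, ((1 - dstar i) * γSstar i + dstar i * γRstar i) = N * Γ)
    (d γS γR : Fin N → ℝ)
    (hd : ∀ i, d i ∈ Set.Icc (0 : ℝ) 1)
    (hγS0 : ∀ i, 0 ≤ γS i) (hγR0 : ∀ i, 0 ≤ γR i)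
    (hbal : ∑ i, (1 - d i) * Real.logb 2 (1 + γS i * hSc i)
      = ∑ i, d i * Real.logb 2 (1 + γR i * hRc i))
    (hpow : ∑ i, ((1 - d i) * γS i + d i * γR i) ≤ N * Γ) :
    ∑ i, d i * Real.logb 2 (1 + γR i * hRc i)
      ≤ ∑ i, dstar i * Real.logb 2 (1 + γRstar i * hRc i) := by
  have hL2 : (0:ℝ) < Real.log 2 := Real.log_pos one_lt_two
  have hlog_eq : ∀ x : ℝ, Real.log x = Real.log 2 * Real.logb 2 x := by
    intro x
    rw [Real.logb, mul_comm, div_mul_cancel₀ _ hL2.ne']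
  -- pointwise Lagrangian bound
  have point : ∀ i,
      d i * (Real.log (1 + γR i * hRc i) - lam * γR i)
        + (1 - d i) * (ρ * Real.log (1 + γS i * hSc i) - lam * γS i)
      ≤ dstar i * (Real.log (1 + γRstar i * hRc i) - lam * γRstar i)
        + (1 - dstar i) * (ρ * Real.log (1 + γSstar i * hSc i) - lam * γSstar i) := by
    intro i
    set GR := Real.log (1 + γRstar i * hRc i) - lam * γRstar i with hGRdef
    set GS := ρ * Real.log (1 + γSstar i * hSc i) - lam * γSstar i with hGSdef
    have hbR : Real.log (1 + γR i * hRc i) - lam * γR i ≤ GR := by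
      have := wf_bound one_pos (hhR i) hlam (hγR0 i)
      rw [hGRdef, hγR i]
      simpa using this
    have hbS : ρ * Real.log (1 + γS i * hSc i) - lam * γS i ≤ GS := by
      have := wf_bound hρ (hhS i) hlam (hγS0 i)
      rw [hGSdef, hγS i]
      simpa using this
    have hGR0 : 0 ≤ GR := by
      have := wf_bound one_pos (hhR i) hlam (le_refl (0:ℝ))
      rw [hGRdef, hγR i]
      simpa using this
    have hGS0 : 0 ≤ GS := by
      have := wf_bound hρ (hhS i) hlam (le_refl (0:ℝ))
      rw [hGSdef, hγS i]
      simpa using this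
    obtain ⟨hd0, hd1⟩ := hd i
    have step1 : d i * (Real.log (1 + γR i * hRc i) - lam * γR i)
        + (1 - d i) * (ρ * Real.log (1 + γS i * hSc i) - lam * γS i)
        ≤ max GR GS := by
      have h1 : d i * (Real.log (1 + γR i * hRc i) - lam * γR i) ≤ d i * max GR GS :=
        mul_le_mul_of_nonneg_left (le_trans hbR (le_max_left _ _)) hd0
      have h2 : (1 - d i) * (ρ * Real.log (1 + γS i * hSc i) - lam * γS i)
          ≤ (1 - d i) * max GR GS :=
        mul_le_mul_of_nonneg_left (le_trans hbS (le_max_right _ _)) (by linarith)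
      nlinarith
    refine le_trans step1 ?_
    rw [hdstar i]
    split_ifs with hc
    · -- dstar = 1 : need max GR GS ≤ GR, i.e. GS ≤ GR
      have hGSR : GS ≤ GR := by
        rcases hc with ⟨hgt, hR, hS⟩ | ⟨hR, hS⟩
        · have hGRc : GR = Real.log (hRc i / lam) - 1 + lam / hRc i := by
            rw [hGRdef, hγR i]
            simpa using wf_closed one_pos (hhR i) hlam (by rwa [div_one])
          have hGSc : GS = ρ * Real.log (ρ * hSc i / lam) - ρ + lam / hSc i := by
            rw [hGSdef, hγS i]
            exact wf_closed hρ (hhS i) hlam hS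
          rw [hGRc, hGSc]
          linarith
        · have hGSz : GS = 0 := by
            rw [hGSdef, hγS i, wf_zero hS hρ (hhS i) hlam]
            simp
          rw [hGSz]; exact hGR0
      simp only [max_le_iff]
      constructor <;> [skip; skip]
      · linarith
      · linarith
    · -- dstar = 0 : need max GR GS ≤ GS, i.e. GR ≤ GS
      push_neg at hc
      obtain ⟨hc1, hc2⟩ := hc
      have hGRS : GR ≤ GS := by
        rcases le_or_gt (hRc i) lam with hR | hR
        · have hGRz : GR = 0 := by
            rw [hGRdef, hγR i, wf_zero (by rwa [div_one]) one_pos (hhR i) hlam]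
            simp
          rw [hGRz]; exact hGS0
        · have hS : lam / ρ < hSc i := hc2 hR
          have hGRc : GR = Real.log (hRc i / lam) - 1 + lam / hRc i := by
            rw [hGRdef, hγR i]
            simpa using wf_closed one_pos (hhR i) hlam (by rwa [div_one])
          have hGSc : GS = ρ * Real.log (ρ * hSc i / lam) - ρ + lam / hSc i := by
            rw [hGSdef, hγS i]
            exact wf_closed hρ (hhS i) hlam hS
          have hnot : Real.log (hRc i / lam) + lam / hRc i - 1
              ≤ ρ * Real.log (ρ * hSc i / lam) + lam / hSc i - ρ := by
            by_contra hgt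
            push_neg at hgt
            exact absurd (hc1 hgt hR) (not_le.mpr hS)
          rw [hGRc, hGSc]
          linarith
      simp only [max_le_iff]
      constructor <;> linarith
  have hsum := Finset.sum_le_sum (fun i (_ : i ∈ Finset.univ) => point i)
  have expand : ∀ dd gS gR : Fin N → ℝ,
      ∑ i, (dd i * (Real.log (1 + gR i * hRc i) - lam * gR i)
        + (1 - dd i) * (ρ * Real.log (1 + gS i * hSc i) - lam * gS i))
      = Real.log 2 * ∑ i, dd i * Real.logb 2 (1 + gR i * hRc i)
        + ρ * Real.log 2 * ∑ i, (1 - dd i) * Real.logb 2 (1 + gS i * hSc i)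
        - lam * ∑ i, ((1 - dd i) * gS i + dd i * gR i) := by
    intro dd gS gR
    simp only [Finset.mul_sum]
    rw [← Finset.sum_add_distrib, ← Finset.sum_sub_distrib]
    refine Finset.sum_congr rfl fun i _ => ?_
    rw [hlog_eq (1 + gR i * hRc i), hlog_eq (1 + gS i * hSc i)]
    ring
  rw [expand d γS γR, expand dstar γSstar γRstar, hbal, hbalstar, hpowstar] at hsum
  have hpow' : lam * ∑ i, ((1 - d i) * γS i + d i * γR i) ≤ lam * (N * Γ) :=
    mul_le_mul_of_nonneg_left hpow hlam.le
  nlinarith [mul_pos (by linarith : (0:ℝ) < 1 + ρ) hL2]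
end

section
/- Let q and u be real random variables on a probability space such that q ≥ 0 almost surely, q and u are independent, E[q²] < ∞ and E[u²] < ∞, and the random variable max(q − u, 0) has the same distribution as q. Then E[u²] − 2·E[u]·E[q] = E[(max(u − q, 0))²]. (Identity (58), used in the proof of Theorem 8 to bound the average queue size of the relay's buffer in steady state.) -/
/-! Pointwise, `max (u - q) 0 ^ 2 + max (q - u) 0 ^ 2 = (u - q) ^ 2`. Stationarity replaces
`E[max (q - u) 0 ^ 2]` by `E[q ^ 2]`, and independence expands
`E[(u - q) ^ 2] = E[u ^ 2] - 2 E[u] E[q] + E[q ^ 2]`; the `E[q ^ 2]` terms cancel. -/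

open MeasureTheory ProbabilityTheory

lemma max_sub_zero_sq_add_max_sub_zero_sq {α : Type*} [Ring α] [LinearOrder α] [IsOrderedRing α]
    (a b : α) : max (a - b) 0 ^ 2 + max (b - a) 0 ^ 2 = (a - b) ^ 2 := by
  rcases le_total a b with h | h
  · rw [max_eq_right (sub_nonpos.2 h), max_eq_left (sub_nonneg.2 h), ← neg_sub a b, neg_sq]
    simp
  · rw [max_eq_left (sub_nonneg.2 h), max_eq_right (sub_nonpos.2 h)]
    simp

namespace ProbabilityTheory

variable {Ω : Type*} [MeasurableSpace Ω] {μ : Measure Ω} {X Y : Ω → ℝ}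

lemma IndepFun.integral_sub_sq [IsFiniteMeasure μ] (hXY : IndepFun X Y μ) (hX : MemLp X 2 μ)
    (hY : MemLp Y 2 μ) :
    ∫ ω, (X ω - Y ω) ^ 2 ∂μ
      = ∫ ω, X ω ^ 2 ∂μ - 2 * (∫ ω, X ω ∂μ) * (∫ ω, Y ω ∂μ) + ∫ ω, Y ω ^ 2 ∂μ := by
  have hcross : Integrable (fun ω => 2 * (X ω * Y ω)) μ :=
    (hXY.integrable_mul (hX.integrable one_le_two) (hY.integrable one_le_two)).const_mul 2
  calc ∫ ω, (X ω - Y ω) ^ 2 ∂μ = ∫ ω, X ω ^ 2 - 2 * (X ω * Y ω) + Y ω ^ 2 ∂μ := by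
        congr 1; funext ω; ring
    _ = ∫ ω, X ω ^ 2 ∂μ - 2 * ∫ ω, X ω * Y ω ∂μ + ∫ ω, Y ω ^ 2 ∂μ := by
        rw [integral_add (f := fun ω => X ω ^ 2 - 2 * (X ω * Y ω))
            (hX.integrable_sq.sub hcross) hY.integrable_sq,
          integral_sub hX.integrable_sq hcross, integral_const_mul]
    _ = _ := by
        rw [hXY.integral_fun_mul_eq_mul_integral hX.aestronglyMeasurable hY.aestronglyMeasurable,
          mul_assoc]

end ProbabilityTheory

namespace MeasureTheory

variable {Ω : Type*} [MeasurableSpace Ω] {μ : Measure Ω} {X Y : Ω → ℝ}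

lemma integral_sub_sq_eq_integral_max_sq_add (hX : MemLp X 2 μ) (hY : MemLp Y 2 μ) :
    ∫ ω, (X ω - Y ω) ^ 2 ∂μ
      = ∫ ω, max (X ω - Y ω) 0 ^ 2 ∂μ + ∫ ω, max (Y ω - X ω) 0 ^ 2 ∂μ := by
  have hXY : MemLp (fun ω => max (X ω - Y ω) 0) 2 μ := (hX.sub hY).pos_part
  have hYX : MemLp (fun ω => max (Y ω - X ω) 0) 2 μ := (hY.sub hX).pos_part
  rw [← integral_add hXY.integrable_sq hYX.integrable_sq]
  simp only [max_sub_zero_sq_add_max_sub_zero_sq]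

end MeasureTheory

theorem lindley_stationary_identity_general
    {Ω : Type*} [MeasurableSpace Ω] (P : Measure Ω) [IsProbabilityMeasure P]
    (q u : Ω → ℝ) (hq : Measurable q) (hu : Measurable u)
    (hindep : IndepFun q u P)
    (hq2 : Integrable (fun ω => q ω ^ 2) P)
    (hu2 : Integrable (fun ω => u ω ^ 2) P)
    (hstat : P.map (fun ω => max (q ω - u ω) 0) = P.map q) :
    (∫ ω, u ω ^ 2 ∂P) - 2 * (∫ ω, u ω ∂P) * (∫ ω, q ω ∂P)
      = ∫ ω, (max (u ω - q ω) 0) ^ 2 ∂P := by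
  have hqL2 : MemLp q 2 P := (memLp_two_iff_integrable_sq hq.aestronglyMeasurable).2 hq2
  have huL2 : MemLp u 2 P := (memLp_two_iff_integrable_sq hu.aestronglyMeasurable).2 hu2
  have hstat_sq : ∫ ω, max (q ω - u ω) 0 ^ 2 ∂P = ∫ ω, q ω ^ 2 ∂P :=
    (IdentDistrib.mk ((hq.sub hu).max measurable_const).aemeasurable hq.aemeasurable hstat
      |>.comp (measurable_id.pow_const 2)).integral_eq
  have hsplit := integral_sub_sq_eq_integral_max_sq_add huL2 hqL2
  have hexpand := hindep.symm.integral_sub_sq huL2 hqL2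
  linarith

/-- **Identity (58)** (used in the proof of Theorem 8). If `q ≥ 0` a.s. is a
stationary queue length for the Lindley recursion with net decrement `u`
(i.e. `max(q − u, 0)` has the same law as `q`), `q` and `u` are independent
with finite second moments, then
`E[u²] − 2 E[u] E[q] = E[(max(u − q, 0))²]`. -/
theorem lindley_stationary_identity
    {Ω : Type*} [MeasurableSpace Ω] (P : Measure Ω) [IsProbabilityMeasure P]
    (q u : Ω → ℝ) (hq : Measurable q) (hu : Measurable u)
    (hq0 : ∀ᵐ ω ∂P, 0 ≤ q ω)
    (hindep : IndepFun q u P)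
    (hq2 : Integrable (fun ω => q ω ^ 2) P)
    (hu2 : Integrable (fun ω => u ω ^ 2) P)
    (hstat : P.map (fun ω => max (q ω - u ω) 0) = P.map q) :
    (∫ ω, u ω ^ 2 ∂P) - 2 * (∫ ω, u ω ∂P) * (∫ ω, q ω ∂P)
      = ∫ ω, (max (u ω - q ω) 0) ^ 2 ∂P :=
  lindley_stationary_identity_general P q u hq hu hindep hq2 hu2 hstat
end

section
/- Let a, b, q be real random variables on a probability space with a ≥ 0, b ≥ 0, a·b = 0 almost surely, q ≥ 0 almost surely, the pair (a, b) independent of q, all second moments finite, 0 < E[a] < E[b], and set ξ = E[a]/E[b]. Assume the stationarity condition that max(q + a − b, 0) has the same distribution as q. Then the mean queue length satisfies E[q] ≤ (1/2)·( E[a²] + ξ·(2−ξ)·E[b²] ) / ( E[b] − E[a] ), and consequently the average delay E[q]/E[a] satisfies E[q]/E[a] ≤ (1/2)·(1/E[a])·( E[a²] + ξ·(2−ξ)·E[b²] ) / ( E[b] − E[a] ). (Theorem 8: upper bound on the average queue size and average delay of buffer-aided relaying with starved buffer, where a = (1−d)S is the per-slot arrival into the buffer, b = d·R is the per-slot potential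 departure, and ξ < 1 because the decision threshold is chosen as ρ < ρ_opt.) -/
/-!
Write `U = b - a` and `L = (U - q)⁺` for the service wasted in a slot. The next queue length is
`q - U + L`, and it is orthogonal to `L`, so equating the first two moments of the two sides of the
Lindley recursion gives `E L = E U` and `E L² = E U² - 2 E q E U`, where `E U² = E a² + E b²`
because `a b = 0`. The bound on `E q` is therefore a lower bound `E L² ≥ (1 - ξ)² E b²`.
Conditionally on `(a, b)` the mean of `L` is `f b` with `f t = E (t - q)⁺` (`expectedExcess`),
a convex function vanishing at `0`, so that `f t / t` is nondecreasing. Jensen gives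
`E L² ≥ E (f b)²`, and Chebyshev's inequality for the size-biased law of `b` followed by
Cauchy–Schwarz gives `E (f b)² (E b)² ≥ (E f b)² E b²`.
-/

open MeasureTheory ProbabilityTheory

section Symmetrization

variable {Ω : Type*} [MeasurableSpace Ω] {μ : Measure Ω}

theorem integral_mul_integral_le_of_ae_prod [SFinite μ] {φ ψ χ ρ : Ω → ℝ}
    (hφ : Integrable φ μ) (hψ : Integrable ψ μ) (hχ : Integrable χ μ) (hρ : Integrable ρ μ)
    (h : ∀ᵐ z ∂μ.prod μ, χ z.1 * ρ z.2 + ρ z.1 * χ z.2 ≤ φ z.1 * ψ z.2 + ψ z.1 * φ z.2) :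
    (∫ x, χ x ∂μ) * ∫ x, ρ x ∂μ ≤ (∫ x, φ x ∂μ) * ∫ x, ψ x ∂μ := by
  have hint : ∫ z, χ z.1 * ρ z.2 + ρ z.1 * χ z.2 ∂μ.prod μ
      ≤ ∫ z, φ z.1 * ψ z.2 + ψ z.1 * φ z.2 ∂μ.prod μ :=
    integral_mono_ae ((hχ.mul_prod hρ).add (hρ.mul_prod hχ))
      ((hφ.mul_prod hψ).add (hψ.mul_prod hφ)) h
  rw [integral_add (hχ.mul_prod hρ) (hρ.mul_prod hχ),
    integral_add (hφ.mul_prod hψ) (hψ.mul_prod hφ)] at hint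
  simp only [integral_prod_mul] at hint
  linarith

variable [IsFiniteMeasure μ]

theorem sq_integral_comp_mul_integral_sq_le {f : ℝ → ℝ} {X : Ω → ℝ}
    (hf₀ : ∀ t, 0 ≤ t → 0 ≤ f t) (hf : ∀ s t, 0 ≤ s → s ≤ t → f s * t ≤ f t * s)
    (hX₀ : ∀ᵐ ω ∂μ, 0 ≤ X ω) (hX : MemLp X 2 μ) (hfX : MemLp (fun ω => f (X ω)) 2 μ) :
    (∫ ω, f (X ω) ∂μ) ^ 2 * ∫ ω, X ω ^ 2 ∂μ ≤ (∫ ω, f (X ω) ^ 2 ∂μ) * (∫ ω, X ω ∂μ) ^ 2 := by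
  have hXi := hX.integrable one_le_two
  have hfXi := hfX.integrable one_le_two
  have hfXX : Integrable (fun ω => f (X ω) * X ω) μ := hfX.integrable_mul hX
  -- Chebyshev's inequality for the size-biased law of `X`, along which `f X / X` and `X` increase
  have chebyshev : (∫ ω, f (X ω) ∂μ) * ∫ ω, X ω ^ 2 ∂μ
      ≤ (∫ ω, f (X ω) * X ω ∂μ) * ∫ ω, X ω ∂μ := by
    refine integral_mul_integral_le_of_ae_prod hfXX hXi hfXi hX.integrable_sq ?_
    filter_upwards [Measure.quasiMeasurePreserving_fst.ae hX₀,
      Measure.quasiMeasurePreserving_snd.ae hX₀] with z h₁ h₂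
    rcases le_total (X z.1) (X z.2) with h | h
    · nlinarith [hf _ _ h₁ h]
    · nlinarith [hf _ _ h₂ h]
  have cauchySchwarz : (∫ ω, f (X ω) * X ω ∂μ) * ∫ ω, f (X ω) * X ω ∂μ
      ≤ (∫ ω, f (X ω) ^ 2 ∂μ) * ∫ ω, X ω ^ 2 ∂μ := by
    refine integral_mul_integral_le_of_ae_prod hfX.integrable_sq hX.integrable_sq hfXX hfXX
      (ae_of_all _ fun z => ?_)
    nlinarith [sq_nonneg (f (X z.1) * X z.2 - X z.1 * f (X z.2))]
  have hfX₀ : 0 ≤ ∫ ω, f (X ω) ∂μ := integral_nonneg_of_ae (hX₀.mono fun _ => hf₀ _)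
  have hX2₀ : 0 ≤ ∫ ω, X ω ^ 2 ∂μ := integral_nonneg fun _ => sq_nonneg _
  rcases hX2₀.eq_or_lt with h0 | hpos
  · rw [← h0, mul_zero]; positivity
  · refine le_of_mul_le_mul_right ?_ hpos
    nlinarith [mul_le_mul chebyshev chebyshev (by positivity) (by nlinarith)]

end Symmetrization

namespace ProbabilityTheory

variable {Ω α β : Type*} [MeasurableSpace Ω] [MeasurableSpace α] [MeasurableSpace β]
  {μ : Measure Ω} [IsFiniteMeasure μ] {X : Ω → α} {Y : Ω → β} {k : α × β → ℝ}

theorem IndepFun.integrable_prod_map (hXY : IndepFun X Y μ) (hX : AEMeasurable X μ)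
    (hY : AEMeasurable Y μ) (hk : Measurable k) (hint : Integrable (fun ω => k (X ω, Y ω)) μ) :
    Integrable k ((μ.map X).prod (μ.map Y)) := by
  rw [← (indepFun_iff_map_prod_eq_prod_map_map hX hY).1 hXY,
    integrable_map_measure hk.aestronglyMeasurable (hX.prodMk hY)]
  exact hint

theorem IndepFun.integrable_integral_comp (hXY : IndepFun X Y μ) (hX : AEMeasurable X μ)
    (hY : AEMeasurable Y μ) (hk : Measurable k) (hint : Integrable (fun ω => k (X ω, Y ω)) μ) :
    Integrable (fun ω => ∫ ω', k (X ω, Y ω') ∂μ) μ := by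
  have hinner : ∀ x, ∫ y, k (x, y) ∂μ.map Y = ∫ ω', k (x, Y ω') ∂μ := fun x =>
    integral_map hY (hk.comp measurable_prodMk_left).aestronglyMeasurable
  have := (integrable_map_measure hk.stronglyMeasurable.integral_prod_right'.aestronglyMeasurable
    hX).1 (hXY.integrable_prod_map hX hY hk hint).integral_prod_left
  simpa only [Function.comp_def, hinner] using this

theorem IndepFun.integral_comp_eq_integral_integral (hXY : IndepFun X Y μ)
    (hX : AEMeasurable X μ) (hY : AEMeasurable Y μ) (hk : Measurable k)
    (hint : Integrable (fun ω => k (X ω, Y ω)) μ) :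
    ∫ ω, k (X ω, Y ω) ∂μ = ∫ ω, ∫ ω', k (X ω, Y ω') ∂μ ∂μ := by
  rw [← integral_map (hX.prodMk hY) hk.aestronglyMeasurable,
    (indepFun_iff_map_prod_eq_prod_map_map hX hY).1 hXY,
    integral_prod _ (hXY.integrable_prod_map hX hY hk hint),
    integral_map hX hk.stronglyMeasurable.integral_prod_right'.aestronglyMeasurable]
  exact integral_congr_ae (ae_of_all _ fun _ =>
    integral_map hY (hk.comp measurable_prodMk_left).aestronglyMeasurable)

end ProbabilityTheory

section Lindley

variable {Ω : Type*} [MeasurableSpace Ω] {μ : Measure Ω} {q U : Ω → ℝ}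

theorem integral_max_sub_eq_of_identDistrib (hq : Integrable q μ) (hU : Integrable U μ)
    (hstat : IdentDistrib (fun ω => max (q ω - U ω) 0) q μ μ) :
    ∫ ω, max (U ω - q ω) 0 ∂μ = ∫ ω, U ω ∂μ := by
  have hsplit : ∀ ω, max (q ω - U ω) 0 = q ω - U ω + max (U ω - q ω) 0 := fun ω => by
    rcases le_total (q ω) (U ω) with h | h
    · rw [max_eq_right (by linarith), max_eq_left (by linarith)]; ring
    · rw [max_eq_left (by linarith), max_eq_right (by linarith)]; ring
  have h := hstat.integral_eq
  simp only [hsplit] at h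
  have hidle : Integrable (fun ω => max (U ω - q ω) 0) μ := (hU.sub hq).pos_part
  have hdiff : Integrable (fun ω => q ω - U ω) μ := hq.sub hU
  rw [integral_add hdiff hidle, integral_sub hq hU] at h
  linarith

theorem integral_max_sub_sq_eq_of_identDistrib (hq : MemLp q 2 μ) (hU : MemLp U 2 μ)
    (hind : IndepFun U q μ) (hstat : IdentDistrib (fun ω => max (q ω - U ω) 0) q μ μ) :
    ∫ ω, max (U ω - q ω) 0 ^ 2 ∂μ = ∫ ω, U ω ^ 2 ∂μ - 2 * (∫ ω, q ω ∂μ) * ∫ ω, U ω ∂μ := by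
  have hsplit : ∀ ω, max (q ω - U ω) 0 ^ 2
      = q ω ^ 2 - 2 * (U ω * q ω) + U ω ^ 2 - max (U ω - q ω) 0 ^ 2 := fun ω => by
    rcases le_total (q ω) (U ω) with h | h
    · rw [max_eq_right (by linarith), max_eq_left (by linarith)]; ring
    · rw [max_eq_left (by linarith), max_eq_right (by linarith)]; ring
  have h := (hstat.comp (measurable_id.pow_const 2)).integral_eq
  simp only [Function.comp_def, id, hsplit] at h
  have hUq : Integrable (fun ω => 2 * (U ω * q ω)) μ := (hU.integrable_mul hq).const_mul 2
  have hidle : Integrable (fun ω => max (U ω - q ω) 0 ^ 2) μ := (hU.sub hq).pos_part.integrable_sq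
  have hq2 : Integrable (fun ω => q ω ^ 2 - 2 * (U ω * q ω)) μ := hq.integrable_sq.sub hUq
  have hdiff2 : Integrable (fun ω => q ω ^ 2 - 2 * (U ω * q ω) + U ω ^ 2) μ :=
    hq2.add hU.integrable_sq
  rw [integral_sub hdiff2 hidle, integral_add hq2 hU.integrable_sq,
    integral_sub hq.integrable_sq hUq, integral_const_mul,
    hind.integral_fun_mul_eq_mul_integral hU.aestronglyMeasurable hq.aestronglyMeasurable] at h
  linarith

end Lindley

section ExpectedExcess

variable {Ω : Type*} [MeasurableSpace Ω] {μ : Measure Ω} {q : Ω → ℝ}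

noncomputable def expectedExcess (μ : Measure Ω) (q : Ω → ℝ) (t : ℝ) : ℝ :=
  ∫ ω, max (t - q ω) 0 ∂μ

theorem expectedExcess_nonneg (t : ℝ) : 0 ≤ expectedExcess μ q t :=
  integral_nonneg fun _ => le_max_right _ _

theorem expectedExcess_of_nonpos (hq₀ : ∀ᵐ ω ∂μ, 0 ≤ q ω) {t : ℝ} (ht : t ≤ 0) :
    expectedExcess μ q t = 0 :=
  integral_eq_zero_of_ae (hq₀.mono fun ω h => max_eq_right (by linarith))

theorem expectedExcess_le [IsProbabilityMeasure μ] (hq₀ : ∀ᵐ ω ∂μ, 0 ≤ q ω)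
    (hq : Integrable q μ) {t : ℝ} (ht : 0 ≤ t) : expectedExcess μ q t ≤ t := by
  calc expectedExcess μ q t ≤ ∫ _, t ∂μ :=
        integral_mono_ae ((integrable_const t).sub hq).pos_part (integrable_const t)
          (hq₀.mono fun ω h => max_le (by linarith) ht)
    _ = t := by simp

theorem expectedExcess_mul_le [IsFiniteMeasure μ] (hq₀ : ∀ᵐ ω ∂μ, 0 ≤ q ω) (hq : Integrable q μ)
    {s t : ℝ} (hs : 0 ≤ s) (hst : s ≤ t) :
    expectedExcess μ q s * t ≤ expectedExcess μ q t * s := by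
  unfold expectedExcess
  rw [← integral_mul_const, ← integral_mul_const]
  refine integral_mono_ae (((integrable_const s).sub hq).pos_part.mul_const t)
    (((integrable_const t).sub hq).pos_part.mul_const s) (hq₀.mono fun ω h => ?_)
  dsimp only
  rcases le_total (q ω) s with h' | h'
  · rw [max_eq_left (by linarith), max_eq_left (by linarith)]; nlinarith
  · rw [max_eq_right (by linarith)]; nlinarith [le_max_right (t - q ω) 0]

theorem measurable_expectedExcess [SFinite μ] (hq : Measurable q) :
    Measurable (expectedExcess μ q) :=
  have hk : Measurable fun p : ℝ × Ω => max (p.1 - q p.2) 0 :=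
    (measurable_fst.sub (hq.comp measurable_snd)).max measurable_const
  hk.stronglyMeasurable.integral_prod_right'.measurable

theorem sq_expectedExcess_le [IsProbabilityMeasure μ] (hq : MemLp q 2 μ) (t : ℝ) :
    expectedExcess μ q t ^ 2 ≤ ∫ ω, max (t - q ω) 0 ^ 2 ∂μ := by
  have hvar := variance_eq_sub ((memLp_const t).sub hq).pos_part ▸ variance_nonneg _ μ
  simpa [expectedExcess] using hvar

end ExpectedExcess

theorem apply_sub_eq_of_mul_eq_zero {f : ℝ → ℝ} (hf : ∀ t ≤ 0, f t = 0) {a b : ℝ}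
    (ha : 0 ≤ a) (hab : a * b = 0) : f (b - a) = f b := by
  rcases mul_eq_zero.1 hab with rfl | rfl
  · rw [sub_zero]
  · rw [hf _ (by linarith), hf _ le_rfl]

section IdleService

variable {Ω : Type*} [MeasurableSpace Ω] {μ : Measure Ω} {q U : Ω → ℝ}

theorem integral_max_sub_eq_integral_expectedExcess [IsFiniteMeasure μ] (hind : IndepFun U q μ)
    (hU : Integrable U μ) (hq : Integrable q μ) :
    ∫ ω, max (U ω - q ω) 0 ∂μ = ∫ ω, expectedExcess μ q (U ω) ∂μ :=
  hind.integral_comp_eq_integral_integral hU.aemeasurable hq.aemeasurable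
    ((measurable_fst.sub measurable_snd).max measurable_const) (hU.sub hq).pos_part

variable [IsProbabilityMeasure μ]

theorem integral_sq_expectedExcess_le (hind : IndepFun U q μ) (hU : MemLp U 2 μ)
    (hq : MemLp q 2 μ) :
    ∫ ω, expectedExcess μ q (U ω) ^ 2 ∂μ ≤ ∫ ω, max (U ω - q ω) 0 ^ 2 ∂μ := by
  have hk : Measurable fun p : ℝ × ℝ => max (p.1 - p.2) 0 ^ 2 :=
    ((measurable_fst.sub measurable_snd).max measurable_const).pow_const 2
  have hint := (hU.sub hq).pos_part.integrable_sq
  rw [hind.integral_comp_eq_integral_integral hU.aemeasurable hq.aemeasurable hk hint]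
  exact integral_mono_of_nonneg (ae_of_all _ fun _ => sq_nonneg _)
    (hind.integrable_integral_comp hU.aemeasurable hq.aemeasurable hk hint)
    (ae_of_all _ fun ω => sq_expectedExcess_le hq (U ω))

theorem sq_integral_max_sub_mul_integral_sq_le {a b : Ω → ℝ} (hq : Measurable q)
    (hq₀ : ∀ᵐ ω ∂μ, 0 ≤ q ω) (ha₀ : ∀ᵐ ω ∂μ, 0 ≤ a ω) (hb₀ : ∀ᵐ ω ∂μ, 0 ≤ b ω)
    (hab : ∀ᵐ ω ∂μ, a ω * b ω = 0) (hind : IndepFun (fun ω => b ω - a ω) q μ)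
    (ha : MemLp a 2 μ) (hb : MemLp b 2 μ) (hqL : MemLp q 2 μ) :
    (∫ ω, max (b ω - a ω - q ω) 0 ∂μ) ^ 2 * ∫ ω, b ω ^ 2 ∂μ
      ≤ (∫ ω, max (b ω - a ω - q ω) 0 ^ 2 ∂μ) * (∫ ω, b ω ∂μ) ^ 2 := by
  set f := expectedExcess μ q
  have hfU : ∀ᵐ ω ∂μ, f (b ω - a ω) = f (b ω) := by
    filter_upwards [ha₀, hab] with ω h₀ h
    exact apply_sub_eq_of_mul_eq_zero (fun t ht => expectedExcess_of_nonpos hq₀ ht) h₀ h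
  have hfb : MemLp (fun ω => f (b ω)) 2 μ := by
    refine hb.of_le ((measurable_expectedExcess hq).comp_aemeasurable
      hb.aestronglyMeasurable.aemeasurable).aestronglyMeasurable ?_
    filter_upwards [hb₀] with ω h
    rw [Real.norm_of_nonneg (expectedExcess_nonneg _), Real.norm_of_nonneg h]
    exact expectedExcess_le hq₀ (hqL.integrable one_le_two) h
  have hmean : ∫ ω, max (b ω - a ω - q ω) 0 ∂μ = ∫ ω, f (b ω) ∂μ :=
    (integral_max_sub_eq_integral_expectedExcess hind ((hb.sub ha).integrable one_le_two)
      (hqL.integrable one_le_two)).trans (integral_congr_ae hfU)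
  have hsecond : ∫ ω, f (b ω) ^ 2 ∂μ ≤ ∫ ω, max (b ω - a ω - q ω) 0 ^ 2 ∂μ :=
    (integral_congr_ae (hfU.mono fun _ h => congrArg (· ^ 2) h)).symm.trans_le
      (integral_sq_expectedExcess_le hind (hb.sub ha) hqL)
  rw [hmean]
  calc (∫ ω, f (b ω) ∂μ) ^ 2 * ∫ ω, b ω ^ 2 ∂μ ≤ (∫ ω, f (b ω) ^ 2 ∂μ) * (∫ ω, b ω ∂μ) ^ 2 :=
        sq_integral_comp_mul_integral_sq_le (fun t _ => expectedExcess_nonneg t)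
          (fun s t hs hst => expectedExcess_mul_le hq₀ (hqL.integrable one_le_two) hs hst)
          hb₀ hb hfb
    _ ≤ _ := by gcongr

end IdleService

theorem mean_queue_le_of_moment_inequality {A B A₂ B₂ Q : ℝ} (hA : 0 < A) (hAB : A < B)
    (h : (B - A) ^ 2 * B₂ ≤ (A₂ + B₂ - 2 * Q * (B - A)) * B ^ 2) :
    Q ≤ 1 / 2 * (A₂ + A / B * (2 - A / B) * B₂) / (B - A) := by
  have hB : 0 < B := hA.trans hAB
  rw [le_div_iff₀ (sub_pos.2 hAB)]
  field_simp
  nlinarith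

/-- **Theorem 8** (upper bound on the average queue size and average delay of
buffer-aided relaying with starved buffer). Let `a = (1−d)S` be the per-slot
arrival into the relay's buffer and `b = dR` the per-slot potential departure,
with `a, b ≥ 0`, `a·b = 0` a.s., the pair `(a,b)` independent of the
stationary queue length `q ≥ 0`, all second moments finite,
`0 < E[a] < E[b]`, `ξ = E[a]/E[b]`, and `max(q + a − b, 0)` distributed as
`q`. Then `E[q] ≤ (1/2)(E[a²] + ξ(2−ξ)E[b²])/(E[b] − E[a])` and the average
delay satisfies
`E[q]/E[a] ≤ (1/2)(1/E[a])(E[a²] + ξ(2−ξ)E[b²])/(E[b] − E[a])`. -/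
theorem starved_buffer_delay_bound
    {Ω : Type*} [MeasurableSpace Ω] (P : Measure Ω) [IsProbabilityMeasure P]
    (a b q : Ω → ℝ) (ha : Measurable a) (hb : Measurable b) (hq : Measurable q)
    (ha0 : ∀ᵐ ω ∂P, 0 ≤ a ω) (hb0 : ∀ᵐ ω ∂P, 0 ≤ b ω)
    (hab : ∀ᵐ ω ∂P, a ω * b ω = 0)
    (hq0 : ∀ᵐ ω ∂P, 0 ≤ q ω)
    (hindep : IndepFun (fun ω => (a ω, b ω)) q P)
    (ha2 : Integrable (fun ω => a ω ^ 2) P)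
    (hb2 : Integrable (fun ω => b ω ^ 2) P)
    (hq2 : Integrable (fun ω => q ω ^ 2) P)
    (hEa : 0 < ∫ ω, a ω ∂P)
    (hEab : (∫ ω, a ω ∂P) < ∫ ω, b ω ∂P)
    (ξ : ℝ) (hξ : ξ = (∫ ω, a ω ∂P) / ∫ ω, b ω ∂P)
    (hstat : P.map (fun ω => max (q ω + a ω - b ω) 0) = P.map q) :
    (∫ ω, q ω ∂P)
      ≤ (1 / 2) * ((∫ ω, a ω ^ 2 ∂P) + ξ * (2 - ξ) * ∫ ω, b ω ^ 2 ∂P)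
          / ((∫ ω, b ω ∂P) - ∫ ω, a ω ∂P) ∧
    (∫ ω, q ω ∂P) / (∫ ω, a ω ∂P)
      ≤ (1 / 2) * (1 / ∫ ω, a ω ∂P)
          * ((∫ ω, a ω ^ 2 ∂P) + ξ * (2 - ξ) * ∫ ω, b ω ^ 2 ∂P)
          / ((∫ ω, b ω ∂P) - ∫ ω, a ω ∂P) := by
  subst hξ
  have haL : MemLp a 2 P := (memLp_two_iff_integrable_sq ha.aestronglyMeasurable).2 ha2
  have hbL : MemLp b 2 P := (memLp_two_iff_integrable_sq hb.aestronglyMeasurable).2 hb2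
  have hqL : MemLp q 2 P := (memLp_two_iff_integrable_sq hq.aestronglyMeasurable).2 hq2
  have hUL : MemLp (fun ω => b ω - a ω) 2 P := hbL.sub haL
  have hind : IndepFun (fun ω => b ω - a ω) q P :=
    hindep.comp (measurable_snd.sub measurable_fst) measurable_id
  have hlindley : IdentDistrib (fun ω => max (q ω - (b ω - a ω)) 0) q P P :=
    ⟨((hq.sub (hb.sub ha)).max measurable_const).aemeasurable, hq.aemeasurable, by
      simpa only [sub_sub_eq_add_sub] using hstat⟩
  have hsq : ∫ ω, (b ω - a ω) ^ 2 ∂P = (∫ ω, a ω ^ 2 ∂P) + ∫ ω, b ω ^ 2 ∂P := by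
    rw [← integral_add ha2 hb2]
    exact integral_congr_ae (hab.mono fun ω h => by linear_combination -2 * h)
  have hmean := integral_max_sub_eq_of_identDistrib (hqL.integrable one_le_two)
    (hUL.integrable one_le_two) hlindley
  have hsecond := integral_max_sub_sq_eq_of_identDistrib hqL hUL hind hlindley
  have hlower := sq_integral_max_sub_mul_integral_sq_le hq hq0 ha0 hb0 hab hind haL hbL hqL
  rw [hmean, hsecond, hsq, integral_sub (hbL.integrable one_le_two)
    (haL.integrable one_le_two)] at hlower
  have hqueue := mean_queue_le_of_moment_inequality hEa hEab hlower
  refine ⟨hqueue, (div_le_div_of_nonneg_right hqueue hEa.le).trans_eq ?_⟩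
  ring
end
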